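/- arXiv:1705.10700 — 5 statements merged into one kernel-verified Lean document; each statement's English description precedes it below -/
import Mathlib

section
/- For |q| < 1 (or as formal power series in q), the generating function of gap-free partitions satisfies ∑_{n≥1} a(n) q^n = ∑_{m≥1} (q^m/(1−q^m)) · ∏_{k=1}^{m−1} (1+q^k). -/
open Finset

/-- A partition is *gap-free* if its set of part values is an integer interval,
i.e. the difference between consecutive parts (in nonincreasing order) is at most 1. -/
def Nat.Partition.IsGapFree {n : ℕ} (π : n.Partition) : Prop :=
  ∀ j ∈ π.parts, ∀ k ∈ π.parts, ∀ i : ℕ, j ≤ i → i ≤ k → i ∈ π.parts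

/-- `a n` is the number of gap-free partitions of `n`. -/
noncomputable def a (n : ℕ) : ℕ := Nat.card {π : n.Partition // π.IsGapFree}

/-!
Write a gap-free partition with `m + 1` parts and smallest part `j + 1` in nonincreasing order as
`λᵢ = j + 1 + #{k ∈ S | i ≤ k}` (`i ≤ m`), where `S ⊆ {0, …, m - 1}` is the set of positions at
which the parts drop (by exactly `1`, since there are no gaps). This is a bijection onto
the triples `(m, j, S)`, and the partition has weight `(m + 1)(j + 1) + ∑_{k ∈ S} (k + 1)`.
Summing `q ^ weight` over `j` gives `q^(m+1) / (1 - q^(m+1))`, and over `S` gives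
`∏_{k < m} (1 + q^(k+1))`. For `‖q‖ < 1` the family is absolutely summable (the products are
bounded by `exp (∑ ‖q‖^(k+1))`), so it may be regrouped by weight.
-/

lemma exists_mem_Icc_eq_of_le_succ_add_one {f : ℕ → ℕ} (hf : ∀ i, f i ≤ f (i + 1) + 1)
    {k l x : ℕ} (hkl : k ≤ l) (hl : f l ≤ x) (hk : x ≤ f k) : ∃ i ∈ Icc k l, f i = x := by
  induction l, hkl using Nat.le_induction with
  | base => exact ⟨k, by simp, by omega⟩
  | succ l hkl ih =>
    by_cases hxl : f l ≤ x
    · obtain ⟨i, hi, rfl⟩ := ih hxl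
      exact ⟨i, Icc_subset_Icc_right l.le_succ hi, rfl⟩
    · exact ⟨l + 1, by simp; omega, by have := hf l; omega⟩

section AntitoneRange

variable {α : Type*} [LinearOrder α]

lemma Antitone.pairwise_ge_map_range {f : ℕ → α} (hf : Antitone f) (N : ℕ) :
    ((List.range N).map f).Pairwise (· ≥ ·) :=
  List.pairwise_map.2 <| List.pairwise_lt_range.imp fun h => hf h.le

lemma Antitone.eq_of_map_range_eq {f g : ℕ → α} (hf : Antitone f) (hg : Antitone g) {N : ℕ}
    (h : (Multiset.range N).map f = (Multiset.range N).map g) {i : ℕ} (hi : i < N) :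
    f i = g i := by
  have hperm : ((List.range N).map f).Perm ((List.range N).map g) := by
    rwa [← Multiset.coe_eq_coe, ← Multiset.map_coe, ← Multiset.map_coe, Multiset.coe_range]
  have := congrArg (·[i]?) <|
    hperm.eq_of_pairwise' (hf.pairwise_ge_map_range N) (hg.pairwise_ge_map_range N)
  simpa [hi] using this

lemma Multiset.exists_antitone_map_range_eq [OrderBot α] (s : Multiset α) :
    ∃ f : ℕ → α, Antitone f ∧ (Multiset.range (Multiset.card s)).map f = s := by
  obtain ⟨L, hL, rfl⟩ : ∃ L : List α, L.Pairwise (· ≥ ·) ∧ (L : Multiset α) = s :=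
    ⟨s.sort (· ≥ ·), s.pairwise_sort _, s.sort_eq _⟩
  refine ⟨fun i => L.getD i ⊥, fun i i' hii' => ?_, ?_⟩
  · dsimp only
    rcases lt_or_ge i' L.length with h | h
    · rw [List.getD_eq_getElem _ _ h, List.getD_eq_getElem _ _ (by omega)]
      rcases hii'.lt_or_eq with hlt | rfl
      · exact List.pairwise_iff_getElem.1 hL _ _ _ _ hlt
      · rfl
    · rw [List.getD_eq_default _ _ h]
      exact bot_le
  · rw [Multiset.coe_card, ← Multiset.coe_range, Multiset.map_coe]
    congr 1
    exact List.ext_getElem (by simp) fun i _ hi => by simp [List.getElem?_eq_getElem hi]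

end AntitoneRange

lemma hasSum_natCard_fiber_mul_pow {R α : Type*} [NormedRing R] [CompleteSpace R]
    (w : α → ℕ) {x : R} (hs : Summable fun t => x ^ w t) :
    HasSum (fun n => (Nat.card {t // w t = n} : R) * x ^ n) (∑' t, x ^ w t) := by
  let e := Equiv.sigmaFiberEquiv w
  refine (e.hasSum_iff.2 hs.hasSum).sigma fun n => ?_
  have hfiber : (fun c : {t // w t = n} => x ^ w (e ⟨n, c⟩)) = fun _ => x ^ n :=
    funext fun c => by rw [Equiv.sigmaFiberEquiv_apply, c.2]
  simp only [Function.comp_apply]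
  rw [hfiber, ← nsmul_eq_mul, ← tsum_const]
  refine Summable.hasSum ?_
  rw [← hfiber]
  exact hs.comp_injective (e.injective.comp sigma_mk_injective)

namespace GapFree

def staircase (j : ℕ) (S : Finset ℕ) (i : ℕ) : ℕ := j + 1 + #{k ∈ S | i ≤ k}

section Staircase

variable {j m : ℕ} {S : Finset ℕ}

lemma staircase_eq_succ_add_ite (i : ℕ) :
    staircase j S i = staircase j S (i + 1) + if i ∈ S then 1 else 0 := by
  have hsplit : {k ∈ S | i ≤ k} = {k ∈ S | i + 1 ≤ k} ∪ {k ∈ S | k = i} := by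
    rw [← filter_or]
    exact filter_congr fun k _ => by omega
  have hdisj : Disjoint {k ∈ S | i + 1 ≤ k} {k ∈ S | k = i} :=
    disjoint_filter.2 fun k _ _ => by omega
  rw [staircase, staircase, hsplit, card_union_of_disjoint hdisj, filter_eq']
  split_ifs <;> simp [add_assoc]

lemma staircase_antitone : Antitone (staircase j S) :=
  antitone_nat_of_succ_le fun i => by rw [staircase_eq_succ_add_ite i]; omega

lemma staircase_le_succ_add_one (i : ℕ) : staircase j S i ≤ staircase j S (i + 1) + 1 := by
  rw [staircase_eq_succ_add_ite i]; split_ifs <;> omega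

lemma staircase_of_subset_range (hS : S ⊆ range m) {i : ℕ} (hi : m ≤ i) :
    staircase j S i = j + 1 := by
  have : {k ∈ S | i ≤ k} = ∅ :=
    filter_false_of_mem fun k hk => by have := mem_range.1 (hS hk); omega
  simp [staircase, this]

lemma sum_range_staircase (hS : S ⊆ range m) :
    ∑ i ∈ range (m + 1), staircase j S i = (m + 1) * (j + 1) + ∑ k ∈ S, (k + 1) := by
  simp only [staircase]
  rw [sum_add_distrib, sum_const, card_range, smul_eq_mul]
  congr 1
  simp only [card_filter]
  rw [sum_comm]
  refine sum_congr rfl fun k hk => ?_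
  have hk : k < m := mem_range.1 (hS hk)
  rw [← card_filter, show {i ∈ range (m + 1) | i ≤ k} = range (k + 1) by ext; simp; omega,
    card_range]

lemma filter_staircase_lt (hS : S ⊆ range m) :
    {k ∈ range m | staircase j S (k + 1) < staircase j S k} = S := by
  ext k
  rw [mem_filter, mem_range, staircase_eq_succ_add_ite k]
  constructor
  · rintro ⟨-, hlt⟩; by_contra hk; simp [hk] at hlt
  · intro hk; simp [hk, mem_range.1 (hS hk)]

lemma staircase_descents {f : ℕ → ℕ} (hf : ∀ i < m, f (i + 1) ≤ f i ∧ f i ≤ f (i + 1) + 1)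
    (hm : 1 ≤ f m) {i : ℕ} (hi : i ≤ m) :
    staircase (f m - 1) {k ∈ range m | f (k + 1) < f k} i = f i := by
  induction hi using Nat.decreasingInduction with
  | self => rw [staircase_of_subset_range (filter_subset _ _) le_rfl]; omega
  | of_succ i hi ih =>
    have := hf i hi
    rw [staircase_eq_succ_add_ite, ih]
    simp only [mem_filter, mem_range, hi, true_and]
    split_ifs <;> omega

end Staircase

/-- `⟨m, j, S⟩` encodes the gap-free partition whose parts are `staircase j S i` for `i ≤ m`. -/
abbrev Code : Type := Σ m : ℕ, ℕ × (range m).powerset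

namespace Code

variable (t : Code)

def weight : ℕ := (t.1 + 1) * (t.2.1 + 1) + ∑ k ∈ t.2.2.1, (k + 1)

def parts : Multiset ℕ := (Multiset.range (t.1 + 1)).map (staircase t.2.1 t.2.2)

lemma subset_range : (t.2.2 : Finset ℕ) ⊆ range t.1 := mem_powerset.1 t.2.2.2

lemma weight_pos : 0 < t.weight := by
  have : 0 < (t.1 + 1) * (t.2.1 + 1) := by positivity
  simp only [weight]; omega

lemma sum_parts : t.parts.sum = t.weight :=
  (sum_range_staircase t.subset_range :)

variable {t} in
lemma mem_parts {x : ℕ} : x ∈ t.parts ↔ ∃ i ≤ t.1, staircase t.2.1 t.2.2 i = x := by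
  simp only [parts, Multiset.mem_map, Multiset.mem_range, Nat.lt_succ_iff]

lemma pos_of_mem_parts {x : ℕ} (hx : x ∈ t.parts) : 0 < x := by
  obtain ⟨i, -, rfl⟩ := mem_parts.1 hx
  simp [staircase]

lemma mem_parts_of_le_of_le {u v x : ℕ} (hu : u ∈ t.parts) (hv : v ∈ t.parts) (hux : u ≤ x)
    (hxv : x ≤ v) : x ∈ t.parts := by
  obtain ⟨i, hi, rfl⟩ := mem_parts.1 hu
  obtain ⟨i', -, rfl⟩ := mem_parts.1 hv
  obtain ⟨k, hk, rfl⟩ := exists_mem_Icc_eq_of_le_succ_add_one staircase_le_succ_add_one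
    (Nat.zero_le t.1) ((staircase_antitone hi).trans hux)
    (hxv.trans (staircase_antitone (Nat.zero_le i')))
  exact mem_parts.2 ⟨k, (mem_Icc.1 hk).2, rfl⟩

def toPartition {n : ℕ} (h : t.weight = n) : n.Partition where
  parts := t.parts
  parts_pos := t.pos_of_mem_parts
  parts_sum := t.sum_parts.trans h

lemma toPartition_isGapFree {n : ℕ} (h : t.weight = n) : (t.toPartition h).IsGapFree :=
  fun _ hu _ hv _ => t.mem_parts_of_le_of_le hu hv

lemma parts_injective : Function.Injective parts := by
  rintro ⟨m, j, S, hS⟩ ⟨m', j', S', hS'⟩ h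
  obtain rfl : m = m' := by simpa [parts] using congrArg Multiset.card h
  have hS := mem_powerset.1 hS
  have hS' := mem_powerset.1 hS'
  have heq {i : ℕ} (hi : i ≤ m) : staircase j S i = staircase j' S' i :=
    staircase_antitone.eq_of_map_range_eq staircase_antitone h (Nat.lt_succ_of_le hi)
  obtain rfl : j = j' := by
    have := heq le_rfl
    rwa [staircase_of_subset_range hS le_rfl, staircase_of_subset_range hS' le_rfl,
      Nat.add_right_cancel_iff] at this
  obtain rfl : S = S' := by
    rw [← filter_staircase_lt (j := j) hS, ← filter_staircase_lt (j := j) hS']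
    exact filter_congr fun k hk => by rw [heq (mem_range.1 hk), heq (mem_range.1 hk).le]
  rfl

lemma exists_parts_eq {n : ℕ} (π : n.Partition) (hπ : π.IsGapFree) (hn : 0 < n) :
    ∃ t : Code, t.parts = π.parts := by
  obtain ⟨f, hf, hfπ⟩ := π.parts.exists_antitone_map_range_eq
  set m := Multiset.card π.parts - 1
  have hcard : Multiset.card π.parts = m + 1 := by
    have : π.parts ≠ 0 := by rintro h; simp [h, ← π.parts_sum] at hn
    have := Multiset.card_pos.2 this
    omega
  rw [hcard] at hfπ
  have hmem {i : ℕ} (hi : i ≤ m) : f i ∈ π.parts :=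
    hfπ ▸ Multiset.mem_map_of_mem f (Multiset.mem_range.2 (Nat.lt_succ_of_le hi))
  have hstep (i : ℕ) (hi : i < m) : f (i + 1) ≤ f i ∧ f i ≤ f (i + 1) + 1 := by
    refine ⟨hf i.le_succ, not_lt.1 fun hlt => ?_⟩
    have hgap := hπ _ (hmem hi) _ (hmem hi.le) (f (i + 1) + 1) le_self_add hlt.le
    obtain ⟨i', -, hi'⟩ := Multiset.mem_map.1 (hfπ ▸ hgap)
    rcases le_or_gt i' i with h | h
    · have := hf h; omega
    · have : f i' ≤ f (i + 1) := hf h; omega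
  refine ⟨⟨m, f m - 1, {k ∈ range m | f (k + 1) < f k}, mem_powerset.2 (filter_subset _ _)⟩, ?_⟩
  rw [← hfπ, parts]
  exact Multiset.map_congr rfl fun i hi => staircase_descents hstep (π.parts_pos (hmem le_rfl))
    (Nat.lt_succ_iff.1 (Multiset.mem_range.1 hi))

noncomputable def fiberEquiv (n : ℕ) :
    {t : Code // t.weight = n + 1} ≃ {π : (n + 1).Partition // π.IsGapFree} :=
  Equiv.ofBijective (fun t => ⟨t.1.toPartition t.2, t.1.toPartition_isGapFree t.2⟩) <| by
    refine ⟨fun t t' h => Subtype.ext (parts_injective ?_), fun π => ?_⟩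
    · exact congrArg (fun π : {π : (n + 1).Partition // π.IsGapFree} => π.1.parts) h
    · obtain ⟨t, ht⟩ := exists_parts_eq π.1 π.2 n.succ_pos
      refine ⟨⟨t, ?_⟩, Subtype.ext (Nat.Partition.ext ht)⟩
      rw [← t.sum_parts, ht, π.1.parts_sum]

lemma natCard_weight_eq_zero : Nat.card {t : Code // t.weight = 0} = 0 :=
  Nat.card_eq_zero.2 <| .inl ⟨fun t => t.1.weight_pos.ne' t.2⟩

lemma natCard_weight_eq_succ (n : ℕ) : Nat.card {t : Code // t.weight = n + 1} = a (n + 1) :=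
  Nat.card_congr (fiberEquiv n)

end Code

lemma hasSum_pow_weight_fiber {𝕜 : Type*} [NormedField 𝕜] [CompleteSpace 𝕜] {x : 𝕜}
    (hx : ‖x‖ < 1) (m : ℕ) :
    HasSum (fun p : ℕ × (range m).powerset => x ^ Code.weight ⟨m, p⟩)
      (x ^ (m + 1) / (1 - x ^ (m + 1)) * ∏ k ∈ range m, (1 + x ^ (k + 1))) := by
  have hy : ‖x ^ (m + 1)‖ < 1 := by
    rw [norm_pow]; exact pow_lt_one₀ (norm_nonneg x) hx m.succ_ne_zero
  have hgeom : HasSum (fun j : ℕ => (x ^ (m + 1)) ^ (j + 1))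
      (x ^ (m + 1) / (1 - x ^ (m + 1))) := by
    simpa only [pow_succ', div_eq_mul_inv] using
      (hasSum_geometric_of_norm_lt_one hy).mul_left (x ^ (m + 1))
  have hsubsets : HasSum (fun S : (range m).powerset => x ^ ∑ k ∈ S.1, (k + 1))
      (∏ k ∈ range m, (1 + x ^ (k + 1))) := by
    convert hasSum_fintype (fun S : (range m).powerset => x ^ ∑ k ∈ S.1, (k + 1)) using 1
    rw [sum_coe_sort (range m).powerset (fun S => x ^ ∑ k ∈ S, (k + 1)), prod_one_add]
    simp only [prod_pow_eq_pow_sum]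
  have hgeom_norm : Summable fun j : ℕ => ‖(x ^ (m + 1)) ^ (j + 1)‖ := by
    simpa only [norm_pow] using
      (summable_nat_add_iff 1).2 (summable_geometric_of_lt_one (norm_nonneg _) hy)
  have hsubsets_norm : Summable fun S : (range m).powerset => ‖x ^ ∑ k ∈ S.1, (k + 1)‖ :=
    .of_finite
  have hsummable := summable_mul_of_summable_norm hgeom_norm hsubsets_norm
  have hprod := hgeom.mul hsubsets hsummable
  have hweight : (fun p : ℕ × (range m).powerset => x ^ Code.weight ⟨m, p⟩) =
      fun p => (x ^ (m + 1)) ^ (p.1 + 1) * x ^ ∑ k ∈ p.2.1, (k + 1) :=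
    funext fun p => by rw [← pow_mul, ← pow_add]; rfl
  rw [hweight]
  exact hprod

lemma pow_div_one_sub_pow_mul_prod_le {r : ℝ} (h0 : 0 ≤ r) (hr : r < 1) (m : ℕ) :
    r ^ (m + 1) / (1 - r ^ (m + 1)) * ∏ k ∈ range m, (1 + r ^ (k + 1)) ≤
      (1 - r)⁻¹ * Real.exp (∑' k : ℕ, r ^ (k + 1)) * r ^ (m + 1) := by
  have hs : Summable fun k : ℕ => r ^ (k + 1) :=
    (summable_nat_add_iff 1).2 (summable_geometric_of_lt_one h0 hr)
  have hprod : ∏ k ∈ range m, (1 + r ^ (k + 1)) ≤ Real.exp (∑' k : ℕ, r ^ (k + 1)) :=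
    (Real.prod_one_add_le_exp_sum _ fun k => by positivity).trans <|
      Real.exp_le_exp.2 (hs.sum_le_tsum _ fun k _ => by positivity)
  have hdiv : r ^ (m + 1) / (1 - r ^ (m + 1)) ≤ r ^ (m + 1) / (1 - r) :=
    div_le_div_of_nonneg_left (by positivity) (sub_pos.2 hr)
      (sub_le_sub_left (pow_le_of_le_one h0 hr.le m.succ_ne_zero) 1)
  calc _ ≤ r ^ (m + 1) / (1 - r) * Real.exp (∑' k : ℕ, r ^ (k + 1)) :=
        mul_le_mul hdiv hprod (by positivity) (div_nonneg (by positivity) (sub_pos.2 hr).le)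
    _ = _ := by ring

lemma summable_pow_weight {r : ℝ} (h0 : 0 ≤ r) (hr : r < 1) :
    Summable fun t : Code => r ^ t.weight := by
  have hfiber (m : ℕ) := hasSum_pow_weight_fiber (by rwa [Real.norm_of_nonneg h0]) m
  rw [summable_sigma_of_nonneg fun t => by positivity]
  have hbound := ((summable_nat_add_iff 1).2 (summable_geometric_of_lt_one h0 hr)).mul_left
    ((1 - r)⁻¹ * Real.exp (∑' k : ℕ, r ^ (k + 1)))
  refine ⟨fun m => (hfiber m).summable, .of_nonneg_of_le (fun m => ?_) (fun m => ?_) hbound⟩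
  · exact tsum_nonneg fun _ => by positivity
  · exact (hfiber m).tsum_eq.trans_le (pow_div_one_sub_pow_mul_prod_le h0 hr m)

end GapFree

/-- `∑_{n≥1} a(n) qⁿ = ∑_{m≥1} (qᵐ/(1−qᵐ)) · ∏_{k=1}^{m−1} (1+qᵏ)` for `|q| < 1`. -/
theorem gapFree_genFun (q : ℂ) (hq : ‖q‖ < 1) :
    ∑' n : ℕ, (a (n + 1) : ℂ) * q ^ (n + 1) =
      ∑' m : ℕ, q ^ (m + 1) / (1 - q ^ (m + 1)) *
        ∏ k ∈ range m, (1 + q ^ (k + 1)) := by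
  have hsum : Summable fun t : GapFree.Code => q ^ t.weight :=
    .of_norm <| by simpa only [norm_pow] using GapFree.summable_pow_weight (norm_nonneg q) hq
  have hcount := hasSum_natCard_fiber_mul_pow GapFree.Code.weight hsum
  have hshift := (hasSum_nat_add_iff' 1).2 hcount
  simp only [sum_range_one, GapFree.Code.natCard_weight_eq_zero,
    GapFree.Code.natCard_weight_eq_succ, Nat.cast_zero, zero_mul, sub_zero] at hshift
  have hfiber := GapFree.hasSum_pow_weight_fiber hq
  rw [hshift.tsum_eq, (hsum.hasSum.sigma hfiber).tsum_eq]
end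

section
/- For every integer n ≥ 1, the number of partitions of n in which only the largest part may repeat (i.e., all parts other than the largest occur exactly once) equals the number of gap-free partitions of n; indeed, conjugation is a bijection between gap-free partitions of n and partitions of n where only the largest part may repeat. -/
/-- A partition in which only the largest part may repeat: every part strictly
smaller than the largest part occurs exactly once. -/
def Nat.Partition.OnlyLargestRepeats {n : ℕ} (π : n.Partition) : Prop :=
  ∀ k ∈ π.parts, k < π.parts.sup → π.parts.count k = 1

/-- The multiset of parts of the conjugate partition: the `k`-th part
(for `k = 1, …, max`) is the number of parts that are `≥ k`. -/
def conjParts (s : Multiset ℕ) : Multiset ℕ :=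
  (Multiset.range s.sup).map fun k => Multiset.card (s.filter fun j => k + 1 ≤ j)

namespace GFAux

/-- Number of elements of `s` that are `≥ m`. -/
def cge (s : Multiset ℕ) (m : ℕ) : ℕ := Multiset.countP (fun j => m ≤ j) s

lemma cge_filter (s : Multiset ℕ) (m : ℕ) :
    Multiset.card (s.filter fun j => m ≤ j) = cge s m :=
  (Multiset.countP_eq_card_filter _ _).symm

lemma cge_anti (s : Multiset ℕ) {m m' : ℕ} (h : m ≤ m') : cge s m' ≤ cge s m := by
  induction s using Multiset.induction with
  | empty => simp [cge]
  | cons j s ih =>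
    simp only [cge, Multiset.countP_cons] at *
    split_ifs <;> omega

lemma cge_count (s : Multiset ℕ) (a : ℕ) : cge s a = s.count a + cge s (a + 1) := by
  induction s using Multiset.induction with
  | empty => simp [cge]
  | cons j s ih =>
    simp only [cge, Multiset.countP_cons, Multiset.count_cons] at *
    split_ifs <;> omega

lemma cge_pos_of_lt_sup {s : Multiset ℕ} {k : ℕ} (h : k < s.sup) : 0 < cge s (k + 1) := by
  rw [cge, Multiset.countP_pos]
  by_contra hc
  push_neg at hc
  have hle : s.sup ≤ k := Multiset.sup_le.2 fun j hj => by have := hc j hj; omega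
  omega

lemma le_sup_of_cge_pos {s : Multiset ℕ} {m : ℕ} (h : 0 < cge s m) : m ≤ s.sup := by
  rw [cge, Multiset.countP_pos] at h
  obtain ⟨j, hj, hmj⟩ := h
  exact hmj.trans (Multiset.le_sup hj)

lemma lt_countP_range {P : ℕ → Prop} [DecidablePred P]
    (hP : ∀ ⦃k l : ℕ⦄, k ≤ l → P l → P k) (n k : ℕ) :
    k < (Multiset.range n).countP P ↔ P k ∧ k < n := by
  induction n with
  | zero => simp
  | succ n ih =>
    rw [Multiset.range_succ, Multiset.countP_cons]
    by_cases h : P n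
    · have hall : (Multiset.range n).countP P = n := by
        rw [Multiset.countP_eq_card.2 fun a ha => hP (le_of_lt (Multiset.mem_range.1 ha)) h,
          Multiset.card_range]
      simp only [h, if_pos, hall]
      constructor
      · intro hk; exact ⟨hP (by omega) h, by omega⟩
      · intro hk; omega
    · simp only [h, if_neg, not_false_iff, add_zero, ih]
      constructor
      · intro ⟨hk1, hk2⟩; exact ⟨hk1, by omega⟩
      · intro ⟨hk1, hk2⟩
        refine ⟨hk1, ?_⟩
        rcases Nat.lt_succ_iff_lt_or_eq.1 hk2 with h' | rfl
        · exact h'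
        · exact absurd hk1 h

lemma conjParts_eq (s : Multiset ℕ) :
    conjParts s = (Multiset.range s.sup).map fun k => cge s (k + 1) := by
  unfold conjParts
  exact Multiset.map_congr rfl fun k _ => cge_filter s (k + 1)

lemma swap (s : Multiset ℕ) {m : ℕ} (hm : 1 ≤ m) (k : ℕ) :
    k < cge (conjParts s) m ↔ m ≤ cge s (k + 1) := by
  have h1 : cge (conjParts s) m
      = (Multiset.range s.sup).countP (fun k => m ≤ cge s (k + 1)) := by
    rw [conjParts_eq, cge, Multiset.countP_map, ← Multiset.countP_eq_card_filter]
  rw [h1, lt_countP_range (fun a b hab hb => hb.trans (cge_anti s (by omega)))]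
  constructor
  · exact fun h => h.1
  · intro h
    refine ⟨h, ?_⟩
    have := le_sup_of_cge_pos (s := s) (m := k + 1) (by omega)
    omega

lemma cge_conj_conj (s : Multiset ℕ) {m : ℕ} (hm : 1 ≤ m) :
    cge (conjParts (conjParts s)) m = cge s m := by
  have h : ∀ j : ℕ, j < cge (conjParts (conjParts s)) m ↔ j < cge s m := by
    intro j
    rw [swap (conjParts s) hm j]
    have h2 := swap s (show 1 ≤ j + 1 by omega) (m - 1)
    have hm1 : m - 1 + 1 = m := by omega
    rw [hm1] at h2
    omega
  have h1 := h (cge s m)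
  have h2 := h (cge (conjParts (conjParts s)) m)
  omega

lemma eq_of_cge {s t : Multiset ℕ} (hs : ∀ j ∈ s, 0 < j) (ht : ∀ j ∈ t, 0 < j)
    (h : ∀ m, 1 ≤ m → cge s m = cge t m) : s = t := by
  ext a
  cases a with
  | zero =>
    rw [Multiset.count_eq_zero.2 (fun hc => absurd (hs 0 hc) (by omega)),
      Multiset.count_eq_zero.2 (fun hc => absurd (ht 0 hc) (by omega))]
  | succ a =>
    have h1 := cge_count s (a + 1)
    have h2 := cge_count t (a + 1)
    have he : a + 1 + 1 = a + 2 := rfl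
    rw [he] at h1 h2
    have h3 := h (a + 1) (by omega)
    have h4 := h (a + 2) (by omega)
    omega

lemma countP_range_lt (a n : ℕ) :
    (Multiset.range n).countP (fun k => k + 1 ≤ a) = min a n := by
  induction n with
  | zero => simp
  | succ n ih =>
    rw [Multiset.range_succ, Multiset.countP_cons, ih]
    split_ifs with h
    · omega
    · omega

lemma sum_map_indicator (t : Multiset ℕ) (p : ℕ → Prop) [DecidablePred p] :
    (t.map (fun k => if p k then 1 else 0)).sum = t.countP p := by
  induction t using Multiset.induction with
  | empty => simp
  | cons j t ih =>
    rw [Multiset.map_cons, Multiset.sum_cons, ih, Multiset.countP_cons]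
    exact Nat.add_comm _ _

lemma sum_conj_aux (s : Multiset ℕ) (n : ℕ) :
    ((Multiset.range n).map (fun k => cge s (k + 1))).sum
      = (s.map (fun j => min j n)).sum := by
  induction s using Multiset.induction with
  | empty => simp [cge]
  | cons a s ih =>
    have hsplit : ∀ k : ℕ, cge (a ::ₘ s) (k + 1)
        = cge s (k + 1) + (if k + 1 ≤ a then 1 else 0) := by
      intro k
      simp [cge, Multiset.countP_cons]
    rw [Multiset.map_congr rfl (fun k _ => hsplit k), Multiset.sum_map_add, ih,
      sum_map_indicator, countP_range_lt, Multiset.map_cons, Multiset.sum_cons]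
    omega

lemma conj_sum (s : Multiset ℕ) (h0 : ∀ j ∈ s, 0 < j) : (conjParts s).sum = s.sum := by
  rw [conjParts_eq, sum_conj_aux]
  have : s.map (fun j => min j s.sup) = s.map (fun j => j) :=
    Multiset.map_congr rfl fun j hj => by
      have := Multiset.le_sup (α := ℕ) hj; omega
  rw [this, Multiset.map_id']

end GFAux

namespace GFAux

open Nat

/-- The conjugate partition. -/
def conj {n : ℕ} (π : n.Partition) : n.Partition where
  parts := conjParts π.parts
  parts_pos := by
    intro i hi
    rw [conjParts_eq, Multiset.mem_map] at hi
    obtain ⟨k, hk, rfl⟩ := hi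
    exact cge_pos_of_lt_sup (Multiset.mem_range.1 hk)
  parts_sum := by
    rw [conj_sum π.parts (fun j hj => π.parts_pos hj)]
    exact π.parts_sum

lemma conj_parts {n : ℕ} (π : n.Partition) : (conj π).parts = conjParts π.parts := rfl

lemma conj_conj {n : ℕ} (π : n.Partition) : conj (conj π) = π := by
  ext1
  rw [conj_parts, conj_parts]
  exact eq_of_cge (fun j hj => (conj (conj π)).parts_pos hj)
    (fun j hj => π.parts_pos hj) (fun m hm => cge_conj_conj π.parts hm)

lemma conj_sup_eq (s : Multiset ℕ) (hs : 0 < s.sup) :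
    (conjParts s).sup = cge s 1 := by
  rw [conjParts_eq]
  refine le_antisymm (Multiset.sup_le.2 ?_) (Multiset.le_sup ?_)
  · intro x hx
    obtain ⟨k, _, rfl⟩ := Multiset.mem_map.1 hx
    exact cge_anti s (by omega)
  · rw [Multiset.mem_map]
    exact ⟨0, Multiset.mem_range.2 hs, rfl⟩

lemma countP_le_countP (s : Multiset ℕ) (p q : ℕ → Prop) [DecidablePred p] [DecidablePred q]
    (h : ∀ a ∈ s, p a → q a) : s.countP p ≤ s.countP q := by
  induction s using Multiset.induction with
  | empty => simp
  | cons j s ih =>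
    rw [Multiset.countP_cons, Multiset.countP_cons]
    have h2 := ih fun a ha => h a (Multiset.mem_cons_of_mem ha)
    have h3 := h j (Multiset.mem_cons_self j s)
    split_ifs <;> simp_all <;> omega

theorem conjParts_OLR (s : Multiset ℕ)
    (hgf : ∀ j ∈ s, ∀ k ∈ s, ∀ i : ℕ, j ≤ i → i ≤ k → i ∈ s) :
    ∀ v ∈ conjParts s, v < (conjParts s).sup → (conjParts s).count v = 1 := by
  intro v hv hlt
  have hv1 : 1 ≤ v := by
    rw [conjParts_eq, Multiset.mem_map] at hv
    obtain ⟨k, hk, rfl⟩ := hv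
    exact cge_pos_of_lt_sup (Multiset.mem_range.1 hk)
  have hsup : 0 < s.sup := by
    rw [conjParts_eq, Multiset.mem_map] at hv
    obtain ⟨k, hk, _⟩ := hv
    have := Multiset.mem_range.1 hk
    omega
  have hcount1 : 1 ≤ (conjParts s).count v := Multiset.one_le_count_iff_mem.2 hv
  have hcc := cge_count (conjParts s) v
  by_contra hne
  have hcount2 : 2 ≤ (conjParts s).count v := by omega
  set k := cge (conjParts s) (v + 1) with hk
  have hk1 : k < cge (conjParts s) v := by omega
  have hk2 : k + 1 < cge (conjParts s) v := by omega
  have e1 : v ≤ cge s (k + 1) := (swap s hv1 k).1 hk1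
  have e2 : v ≤ cge s (k + 2) := by
    have := (swap s hv1 (k + 1)).1 hk2
    have he : k + 1 + 1 = k + 2 := rfl
    rwa [he] at this
  have e3 : cge s (k + 1) ≤ v := by
    by_contra hc
    have : k < cge (conjParts s) (v + 1) := (swap s (by omega) k).2 (by omega)
    omega
  have hnomem : s.count (k + 1) = 0 := by
    have h5 := cge_count s (k + 1)
    have he : k + 1 + 1 = k + 2 := rfl
    rw [he] at h5
    have h6 := cge_anti s (show k + 1 ≤ k + 2 by omega)
    omega
  have hbig : ∃ j ∈ s, k + 2 ≤ j := by
    rw [← Multiset.countP_pos (p := fun j => k + 2 ≤ j)]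
    show 0 < cge s (k + 2)
    omega
  have hsmall : ∃ j ∈ s, j ≤ k := by
    by_contra hc
    push_neg at hc
    have hmono : cge s 1 ≤ cge s (k + 1) := by
      unfold cge
      exact countP_le_countP s _ _ fun j hj _ => by have := hc j hj; omega
    rw [conj_sup_eq s hsup] at hlt
    omega
  obtain ⟨j1, hj1, hj1le⟩ := hsmall
  obtain ⟨j2, hj2, hj2le⟩ := hbig
  have hmem : k + 1 ∈ s := hgf j1 hj1 j2 hj2 (k + 1) (by omega) (by omega)
  rw [← Multiset.count_pos] at hmem
  omega

/-- Discrete intermediate value theorem for slowly decreasing sequences. -/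
lemma ivt (g : ℕ → ℕ) (b : ℕ) : ∀ a : ℕ, b ≤ a →
    (∀ k, b ≤ k → k < a → g k ≤ g (k + 1) + 1) →
    ∀ i, g a ≤ i → i ≤ g b → ∃ k, b ≤ k ∧ k ≤ a ∧ g k = i := by
  intro a
  induction a with
  | zero =>
    intro hba _ i h1 h2
    have : b = 0 := by omega
    subst this
    exact ⟨0, le_refl _, le_refl _, by omega⟩
  | succ a ih =>
    intro hba hstep i h1 h2
    by_cases hcase : g (a + 1) = i
    · exact ⟨a + 1, hba, le_refl _, hcase⟩
    · have hlt : g (a + 1) < i := by omega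
      by_cases hb : b = a + 1
      · subst hb; omega
      · have hba' : b ≤ a := by omega
        have h1' : g a ≤ i := by
          have := hstep a hba' (by omega)
          omega
        obtain ⟨k, hk1, hk2, hk3⟩ := ih hba' (fun k hk hk' => hstep k hk (by omega)) i h1' h2
        exact ⟨k, hk1, by omega, hk3⟩

theorem conjParts_gapFree (s : Multiset ℕ)
    (holr : ∀ k ∈ s, k < s.sup → s.count k = 1) :
    ∀ x ∈ conjParts s, ∀ y ∈ conjParts s, ∀ i : ℕ, x ≤ i → i ≤ y → i ∈ conjParts s := by
  intro x hx y hy i hxi hiy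
  rw [conjParts_eq, Multiset.mem_map] at hx hy ⊢
  obtain ⟨a, ha, rfl⟩ := hx
  obtain ⟨b, hb, rfl⟩ := hy
  rw [Multiset.mem_range] at ha hb
  rcases le_or_gt b a with hba | hab
  · have hstep : ∀ k, b ≤ k → k < a → cge s (k + 1) ≤ cge s (k + 1 + 1) + 1 := by
      intro k _ hk
      have hcc := cge_count s (k + 1)
      by_cases hmem : k + 1 ∈ s
      · have := holr (k + 1) hmem (by omega)
        omega
      · rw [← Multiset.count_eq_zero] at hmem
        omega
    obtain ⟨k, hk1, hk2, hk3⟩ := ivt (fun k => cge s (k + 1)) b a hba hstep i hxi hiy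
    exact ⟨k, Multiset.mem_range.2 (by omega), hk3⟩
  · have hyx : cge s (b + 1) ≤ cge s (a + 1) := cge_anti s (by omega)
    have heq : i = cge s (a + 1) := by omega
    exact ⟨a, Multiset.mem_range.2 ha, heq.symm⟩

theorem conj_OLR {n : ℕ} (π : n.Partition) (h : π.IsGapFree) :
    (conj π).OnlyLargestRepeats :=
  fun v hv hlt => conjParts_OLR π.parts h v hv hlt

theorem conj_GF {n : ℕ} (π : n.Partition) (h : π.OnlyLargestRepeats) :
    (conj π).IsGapFree :=
  fun x hx y hy i h1 h2 => conjParts_gapFree π.parts h x hx y hy i h1 h2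

/-- Conjugation as an equivalence between gap-free partitions and partitions
where only the largest part repeats. -/
def conjEquiv (n : ℕ) :
    {π : n.Partition // π.IsGapFree} ≃ {π : n.Partition // π.OnlyLargestRepeats} where
  toFun := fun π => ⟨conj π.1, conj_OLR π.1 π.2⟩
  invFun := fun σ => ⟨conj σ.1, conj_GF σ.1 σ.2⟩
  left_inv := fun π => Subtype.ext (conj_conj π.1)
  right_inv := fun σ => Subtype.ext (conj_conj σ.1)

end GFAux


/-- The number of partitions of `n` where only the largest part may repeat equals the
number of gap-free partitions of `n`; indeed, conjugation gives a bijection between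
gap-free partitions of `n` and partitions of `n` where only the largest part may repeat. -/
theorem gapFree_card_eq_onlyLargestRepeats_card (n : ℕ) (hn : 1 ≤ n) :
    Nat.card {π : n.Partition // π.OnlyLargestRepeats} =
      Nat.card {π : n.Partition // π.IsGapFree} ∧
    ∃ e : {π : n.Partition // π.IsGapFree} ≃ {π : n.Partition // π.OnlyLargestRepeats},
      ∀ π, ((e π : {π : n.Partition // π.OnlyLargestRepeats}) : n.Partition).parts =
        conjParts (π : n.Partition).parts :=
  ⟨Nat.card_congr (GFAux.conjEquiv n).symm, GFAux.conjEquiv n, fun _ => rfl⟩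
end

section
/- For |q| < 1 (or as formal power series in q), ∑_{π ∈ D} (−1)^{♯(π)} σ(π) q^{|π|} = −∑_{m≥1} m q^m ∏_{k≥m+1} (1−q^k), where the sum on the left ranges over all nonempty partitions into distinct parts. Equivalently, for each n ≥ 1 the signed sum ∑ (−1)^{♯(π)} σ(π), taken over distinct partitions π of n, equals minus the coefficient of q^n in ∑_{m≥1} m q^m (q^{m+1};q)_∞. -/
open Finset

/-- The smallest part of a partition. -/
noncomputable def Nat.Partition.minPart {n : ℕ} (π : n.Partition) : ℕ :=
  sInf {i | i ∈ π.parts}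

/-!
Encode a distinct partition by the finset `S` of its parts minus one, and give `S` the weight
`(-1)^#S σ q^|π|`. This weight is bounded by `∏_{i ∈ S} (i + 1) ‖q‖^(i + 1)`, so the sum over all
finsets converges absolutely and may be regrouped both by size, which gives the left-hand side,
and by smallest element. A nonempty `S` with least element `m` is uniquely `{m} ∪ (m + 1 + T)`
with `T` arbitrary, so the finsets with least element `m` contribute
`-(m + 1) q^(m + 1) ∑_T ∏_{t ∈ T} (-q^(m + 2 + t)) = -(m + 1) q^(m + 1) ∏_{k ≥ m + 2} (1 - q^k)`.
-/

namespace Nat.Partition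

variable {n : ℕ} {π : n.Partition}

lemma minPart_le_of_mem {a : ℕ} (ha : a ∈ π.parts) : π.minPart ≤ a :=
  Nat.sInf_le ha

lemma minPart_eq_of_isLeast {a : ℕ} (ha : a ∈ π.parts) (hle : ∀ b ∈ π.parts, a ≤ b) :
    π.minPart = a :=
  IsLeast.csInf_eq ⟨ha, hle⟩

lemma minPart_le_prod_parts (π : n.Partition) : π.minPart ≤ π.parts.prod := by
  rcases Multiset.empty_or_exists_mem π.parts with h | ⟨a, ha⟩
  · simp [minPart, h]
  · exact (minPart_le_of_mem ha).trans
      (Multiset.single_le_prod (fun b hb => π.parts_pos hb) a ha)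

end Nat.Partition

/-- A finset `S ⊆ ℕ` encodes the partition into the distinct parts `i + 1`, `i ∈ S`,
which is a partition of `partsSum S`. -/
def partsSum (S : Finset ℕ) : ℕ := ∑ i ∈ S, (i + 1)

def partitionOfFinset {n : ℕ} (S : Finset ℕ) (h : partsSum S = n) : n.Partition where
  parts := S.val.map (· + 1)
  parts_pos := by
    simp only [Multiset.mem_map]
    rintro _ ⟨i, _, rfl⟩
    omega
  parts_sum := by rw [← h, partsSum, Finset.sum_eq_multiset_sum]

section partitionOfFinset

variable {n : ℕ} {S : Finset ℕ} (h : partsSum S = n)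

@[simp]
lemma card_parts_partitionOfFinset : Multiset.card (partitionOfFinset S h).parts = #S := by
  simp [partitionOfFinset]

lemma prod_parts_partitionOfFinset :
    (partitionOfFinset S h).parts.prod = ∏ i ∈ S, (i + 1) := by
  simp [partitionOfFinset, Finset.prod_map_val]

lemma minPart_partitionOfFinset {m : ℕ} (hm : m ∈ S) (hle : ∀ i ∈ S, m ≤ i) :
    (partitionOfFinset S h).minPart = m + 1 := by
  refine Nat.Partition.minPart_eq_of_isLeast (Multiset.mem_map_of_mem _ hm) ?_
  simp only [partitionOfFinset, Multiset.mem_map]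
  rintro _ ⟨i, hi, rfl⟩
  exact Nat.succ_le_succ (hle i hi)

lemma partitionOfFinset_mem_distincts : partitionOfFinset S h ∈ Nat.Partition.distincts n := by
  simp only [Nat.Partition.distincts, Finset.mem_filter, Finset.mem_univ, true_and]
  exact S.nodup.map (add_left_injective 1)

end partitionOfFinset

lemma exists_partitionOfFinset_eq {n : ℕ} {π : n.Partition}
    (hπ : π ∈ Nat.Partition.distincts n) : ∃ S h, partitionOfFinset S h = π := by
  have hnodup : (π.parts.map (· - 1)).Nodup := by
    refine (Finset.mem_filter.1 hπ).2.map_on fun a ha b hb hab => ?_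
    have := π.parts_pos ha
    have := π.parts_pos hb
    omega
  have hparts : (π.parts.map (· - 1)).map (· + 1) = π.parts := by
    rw [Multiset.map_map]
    refine (Multiset.map_congr rfl fun a ha => ?_).trans (Multiset.map_id _)
    have := π.parts_pos ha
    simp only [Function.comp_apply, id_eq]
    omega
  refine ⟨⟨_, hnodup⟩, ?_, Nat.Partition.ext hparts⟩
  rw [partsSum, Finset.sum_eq_multiset_sum]
  exact (congrArg Multiset.sum hparts).trans π.parts_sum

lemma partitionOfFinset_bijective (n : ℕ) :
    Function.Bijective fun S : partsSum ⁻¹' {n} =>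
      (⟨partitionOfFinset S.1 S.2, partitionOfFinset_mem_distincts S.2⟩ :
        {π : n.Partition // π ∈ Nat.Partition.distincts n}) := by
  refine ⟨fun S T hST => ?_, fun ⟨π, hπ⟩ => ?_⟩
  · have := congrArg (·.1.parts) hST
    exact Subtype.ext (Finset.val_injective (Multiset.map_injective (add_left_injective 1) this))
  · obtain ⟨S, h, rfl⟩ := exists_partitionOfFinset_eq hπ
    exact ⟨⟨S, h⟩, rfl⟩

noncomputable def signedWeight (q : ℂ) (S : Finset ℕ) : ℂ :=
  (-1) ^ #S * ((partitionOfFinset S rfl).minPart : ℂ) * q ^ partsSum S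

lemma signedWeight_empty (q : ℂ) : signedWeight q ∅ = 0 := by
  simp [signedWeight, Nat.Partition.minPart, partitionOfFinset]

lemma norm_signedWeight_le (q : ℂ) (S : Finset ℕ) :
    ‖signedWeight q S‖ ≤ ∏ i ∈ S, ((i : ℝ) + 1) * ‖q‖ ^ (i + 1) := by
  have hmin : ((partitionOfFinset S rfl).minPart : ℝ) ≤ ∏ i ∈ S, ((i : ℝ) + 1) := by
    exact_mod_cast (Nat.Partition.minPart_le_prod_parts _).trans_eq
      (prod_parts_partitionOfFinset rfl)
  rw [Finset.prod_mul_distrib, Finset.prod_pow_eq_pow_sum, signedWeight, norm_mul, norm_mul,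
    norm_pow, norm_neg, norm_one, one_pow, one_mul, norm_pow, Complex.norm_natCast]
  exact mul_le_mul_of_nonneg_right hmin (by positivity)

lemma summable_signedWeight {q : ℂ} (hq : ‖q‖ < 1) : Summable (signedWeight q) := by
  have hgeom : Summable fun i : ℕ => ((i : ℝ) + 1) * ‖q‖ ^ (i + 1) := by
    simpa using (summable_nat_add_iff 1).2
      (summable_pow_mul_geometric_of_norm_lt_one 1 (by simpa using hq) : Summable
        fun i : ℕ => ((i : ℝ) ^ 1 * ‖q‖ ^ i))
  exact (summable_finsetProd_of_summable_nonneg (fun i => by positivity) hgeom).of_norm_bounded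
    (norm_signedWeight_le q)

lemma signedWeight_eq_of_partsSum_eq {n : ℕ} (q : ℂ) {S : Finset ℕ} (h : partsSum S = n) :
    signedWeight q S = (-1) ^ Multiset.card (partitionOfFinset S h).parts *
      ((partitionOfFinset S h).minPart : ℂ) * q ^ n := by
  subst h
  rw [card_parts_partitionOfFinset]
  rfl

lemma tsum_signedWeight_fiber (q : ℂ) (n : ℕ) :
    ∑' S : partsSum ⁻¹' {n}, signedWeight q S =
      (∑ π ∈ Nat.Partition.distincts n,
        (-1 : ℂ) ^ (Multiset.card π.parts) * (π.minPart : ℂ)) * q ^ n := by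
  rw [Finset.sum_mul, ← Finset.tsum_subtype,
    ← (Equiv.ofBijective _ (partitionOfFinset_bijective n)).tsum_eq]
  exact tsum_congr fun S => signedWeight_eq_of_partsSum_eq q S.2

lemma hasSum_signedWeight_fiberwise {q : ℂ} (hq : ‖q‖ < 1) :
    HasSum (fun n : ℕ => (∑ π ∈ Nat.Partition.distincts n,
        (-1 : ℂ) ^ (Multiset.card π.parts) * (π.minPart : ℂ)) * q ^ n)
      (∑' S, signedWeight q S) := by
  simpa only [tsum_signedWeight_fiber] using
    (summable_signedWeight hq).hasSum.tsum_fiberwise partsSum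

def insertAbove (m : ℕ) (T : Finset ℕ) : Finset ℕ :=
  insert m (T.map (addLeftEmbedding (m + 1)))

section insertAbove

variable {m : ℕ} {T : Finset ℕ}

lemma notMem_map_addLeftEmbedding : m ∉ T.map (addLeftEmbedding (m + 1)) := by
  simp only [Finset.mem_map, addLeftEmbedding_apply, not_exists, not_and]
  omega

lemma mem_insertAbove_self : m ∈ insertAbove m T :=
  Finset.mem_insert_self _ _

lemma le_of_mem_insertAbove {i : ℕ} (hi : i ∈ insertAbove m T) : m ≤ i := by
  simp only [insertAbove, Finset.mem_insert, Finset.mem_map, addLeftEmbedding_apply] at hi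
  omega

lemma card_insertAbove : #(insertAbove m T) = #T + 1 := by
  rw [insertAbove, Finset.card_insert_of_notMem notMem_map_addLeftEmbedding, Finset.card_map]

lemma partsSum_insertAbove :
    partsSum (insertAbove m T) = (m + 1) + ∑ t ∈ T, (m + 1 + (t + 1)) := by
  rw [partsSum, insertAbove, Finset.sum_insert notMem_map_addLeftEmbedding, Finset.sum_map]
  simp only [addLeftEmbedding_apply, add_assoc]

lemma injective_uncurry_insertAbove : Function.Injective (Function.uncurry insertAbove) := by
  rintro ⟨m, T⟩ ⟨m', T'⟩ h
  simp only [Function.uncurry_apply_pair] at h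
  obtain rfl : m = m' := le_antisymm (le_of_mem_insertAbove (h.symm ▸ mem_insertAbove_self))
    (le_of_mem_insertAbove (h ▸ mem_insertAbove_self))
  have hmap : T.map (addLeftEmbedding (m + 1)) = T'.map (addLeftEmbedding (m + 1)) := by
    rw [← Finset.erase_insert notMem_map_addLeftEmbedding, ← insertAbove, h, insertAbove,
      Finset.erase_insert notMem_map_addLeftEmbedding]
  rw [Finset.map_injective _ hmap]

lemma exists_insertAbove_eq {S : Finset ℕ} (hS : S.Nonempty) : ∃ m T, insertAbove m T = S := by
  refine ⟨S.min' hS, (S.erase (S.min' hS)).image (· - (S.min' hS + 1)), ?_⟩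
  ext i
  simp only [insertAbove, Finset.mem_insert, Finset.mem_map, Finset.mem_image, Finset.mem_erase,
    addLeftEmbedding_apply]
  have hmin : ∀ j ∈ S, S.min' hS ≤ j := S.min'_le
  constructor
  · rintro (rfl | ⟨_, ⟨j, ⟨hj, hjS⟩, rfl⟩, rfl⟩)
    · exact S.min'_mem hS
    · have := hmin j hjS
      rwa [show S.min' hS + 1 + (j - (S.min' hS + 1)) = j by omega]
  · intro hi
    refine or_iff_not_imp_left.2 fun hne => ⟨i - (S.min' hS + 1), ⟨i, ⟨hne, hi⟩, rfl⟩, ?_⟩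
    have := hmin i hi
    omega

end insertAbove

lemma signedWeight_insertAbove (q : ℂ) (m : ℕ) (T : Finset ℕ) :
    signedWeight q (insertAbove m T) =
      -(((m : ℂ) + 1) * q ^ (m + 1) * ∏ t ∈ T, -q ^ (m + 1 + (t + 1))) := by
  rw [signedWeight, card_insertAbove,
    minPart_partitionOfFinset rfl mem_insertAbove_self fun _ => le_of_mem_insertAbove,
    partsSum_insertAbove, pow_add, Finset.prod_neg, Finset.prod_pow_eq_pow_sum]
  push_cast
  ring

lemma tsum_signedWeight_insertAbove {q : ℂ} (hq : ‖q‖ < 1) (m : ℕ) :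
    ∑' T, signedWeight q (insertAbove m T) =
      -(((m : ℂ) + 1) * q ^ (m + 1) * ∏' k : ℕ, (1 - q ^ (m + 1 + (k + 1)))) := by
  have hg : Summable fun k : ℕ => ‖-q ^ (m + 1 + (k + 1))‖ := by
    refine ((summable_geometric_of_lt_one (norm_nonneg q) hq).mul_left
      (‖q‖ ^ (m + 1 + 1))).congr fun k => ?_
    rw [norm_neg, norm_pow, ← pow_add]
    ring_nf
  simp_rw [signedWeight_insertAbove, tsum_neg, tsum_mul_left, sub_eq_add_neg,
    tprod_one_add (summable_finsetProd_of_summable_norm hg)]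

lemma tsum_signedWeight_eq {q : ℂ} (hq : ‖q‖ < 1) :
    ∑' S, signedWeight q S =
      -∑' m : ℕ, ((m : ℂ) + 1) * q ^ (m + 1) * ∏' k : ℕ, (1 - q ^ (m + 1 + (k + 1))) := by
  have hsum := (summable_signedWeight hq).comp_injective injective_uncurry_insertAbove
  have hsupp : Function.support (signedWeight q) ⊆ Set.range (Function.uncurry insertAbove) := by
    intro S hS
    have hne : S.Nonempty := Finset.nonempty_iff_ne_empty.2 <| by
      rintro rfl
      exact hS (signedWeight_empty q)
    obtain ⟨m, T, h⟩ := exists_insertAbove_eq hne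
    exact ⟨(m, T), h⟩
  calc ∑' S, signedWeight q S
      = ∑' p : ℕ × Finset ℕ, signedWeight q (Function.uncurry insertAbove p) :=
        (injective_uncurry_insertAbove.tsum_eq hsupp).symm
    _ = ∑' (m : ℕ) (T : Finset ℕ), signedWeight q (insertAbove m T) :=
        hsum.tsum_prod' hsum.prod_factor
    _ = _ := by simp_rw [tsum_signedWeight_insertAbove hq, tsum_neg]

/-- `∑_{π ∈ D} (−1)^{♯(π)} σ(π) q^{|π|} = −∑_{m≥1} m qᵐ ∏_{k≥m+1} (1−qᵏ)` for `|q| < 1`,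
where `D` is the set of nonempty partitions into distinct parts, `σ(π)` is the smallest
part, `♯(π)` the number of parts and `|π|` the sum of the parts of `π`.  The left-hand
side is written as a power series in `q` whose `n`-th coefficient is the signed sum
`∑ (−1)^{♯(π)} σ(π)` over all distinct partitions `π` of `n` (the empty partition of `0`
contributes `0`). -/
theorem signed_sum_smallest_parts_distinct (q : ℂ) (hq : ‖q‖ < 1) :
    ∑' n : ℕ,
        (∑ π ∈ Nat.Partition.distincts n,
          (-1 : ℂ) ^ (Multiset.card π.parts) * (π.minPart : ℂ)) * q ^ n =
      -∑' m : ℕ, ((m : ℂ) + 1) * q ^ (m + 1) *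
        ∏' k : ℕ, (1 - q ^ (m + 1 + (k + 1))) := by
  rw [(hasSum_signedWeight_fiberwise hq).tsum_eq, tsum_signedWeight_eq hq]
end

section
/- For |q| < 1 (or as formal power series in q), (q;q)_∞ · ∑_{m≥1} m q^m/(q;q)_m = ∑_{m≥1} q^m/(1−q^m). -/
/-!
Write `e(x) = ∑ xᵐ/(q;q)ₘ` and `θ(x) = ∑ m xᵐ/(q;q)ₘ = x e'(x)`. Comparing coefficients gives the
q-difference equations `e(xq) = (1 - x) e(x)` and `θ(xq) = (1 - x) θ(x) - x e(x)`. Iterating them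
along `x, xq, xq², …` and using `e(xqⁿ) → 1`, `θ(xqⁿ) → 0` yields Euler's identity
`(x;q)_∞ e(x) = 1` and `θ(x) = e(x) ∑ₖ xqᵏ/(1 - xqᵏ)`, the logarithmic derivative of `1/(x;q)_∞`;
at `x = q` the two combine to the theorem. The only analytic input is that `(q;q)ₙ` stays away
from `0`, since it converges to `(q;q)_∞ ≠ 0`.
-/

open Finset Filter Topology

section qPochhammer

variable {𝕜 : Type*} [NormedField 𝕜] {a q : 𝕜}

def qPochhammer (a q : 𝕜) (n : ℕ) : 𝕜 := ∏ i ∈ range n, (1 - a * q ^ i)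

@[simp]
lemma qPochhammer_zero (a q : 𝕜) : qPochhammer a q 0 = 1 := prod_range_zero _

lemma qPochhammer_succ (a q : 𝕜) (n : ℕ) :
    qPochhammer a q (n + 1) = qPochhammer a q n * (1 - a * q ^ n) :=
  prod_range_succ _ _

lemma norm_mul_pow_lt_one (ha : ‖a‖ < 1) (hq : ‖q‖ ≤ 1) (n : ℕ) : ‖a * q ^ n‖ < 1 := by
  rw [norm_mul, norm_pow]
  exact mul_lt_one_of_nonneg_of_lt_one_left (norm_nonneg a) ha (pow_le_one₀ (norm_nonneg q) hq)

lemma norm_mul_lt_one {y : 𝕜} (ha : ‖a‖ < 1) (hy : ‖y‖ ≤ 1) : ‖a * y‖ < 1 := by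
  simpa using norm_mul_pow_lt_one ha hy 1

lemma one_sub_ne_zero_of_norm_lt_one {z : 𝕜} (hz : ‖z‖ < 1) : 1 - z ≠ 0 := by
  rw [sub_ne_zero]
  rintro rfl
  simp at hz

lemma qPochhammer_ne_zero (ha : ‖a‖ < 1) (hq : ‖q‖ ≤ 1) (n : ℕ) : qPochhammer a q n ≠ 0 :=
  prod_ne_zero_iff.mpr fun i _ ↦ one_sub_ne_zero_of_norm_lt_one (norm_mul_pow_lt_one ha hq i)

lemma summable_norm_mul_pow (a : 𝕜) (hq : ‖q‖ < 1) : Summable fun i : ℕ ↦ ‖a * q ^ i‖ := by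
  simpa [norm_mul, norm_pow] using (summable_geometric_of_lt_one (norm_nonneg q) hq).mul_left ‖a‖

variable [CompleteSpace 𝕜]

lemma multipliable_one_sub_mul_pow (a : 𝕜) (hq : ‖q‖ < 1) :
    Multipliable fun i : ℕ ↦ 1 - a * q ^ i := by
  simpa [sub_eq_add_neg] using multipliable_one_add_of_summable (f := fun i ↦ -(a * q ^ i))
    (by simpa using summable_norm_mul_pow a hq)

lemma tendsto_qPochhammer (a : 𝕜) (hq : ‖q‖ < 1) :
    Tendsto (qPochhammer a q) atTop (𝓝 (∏' i : ℕ, (1 - a * q ^ i))) :=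
  (multipliable_one_sub_mul_pow a hq).hasProd.tendsto_prod_nat

lemma tprod_one_sub_mul_pow_ne_zero (ha : ‖a‖ < 1) (hq : ‖q‖ < 1) :
    ∏' i : ℕ, (1 - a * q ^ i) ≠ 0 := by
  simpa [sub_eq_add_neg] using
    tprod_one_add_ne_zero_of_summable (f := fun i : ℕ ↦ -(a * q ^ i))
      (fun i ↦ by simpa [sub_eq_add_neg] using
        one_sub_ne_zero_of_norm_lt_one (norm_mul_pow_lt_one ha hq.le i))
      (by simpa using summable_norm_mul_pow a hq)

lemma exists_norm_inv_qPochhammer_le (ha : ‖a‖ < 1) (hq : ‖q‖ < 1) :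
    ∃ C, ∀ n, ‖(qPochhammer a q n)⁻¹‖ ≤ C := by
  have h := (tendsto_qPochhammer a hq).inv₀ (tprod_one_sub_mul_pow_ne_zero ha hq)
  obtain ⟨C, hC⟩ := isBounded_iff_forall_norm_le.mp (Metric.isBounded_range_of_tendsto _ h)
  exact ⟨C, fun n ↦ hC _ ⟨n, rfl⟩⟩

end qPochhammer

section qExp

variable {𝕜 : Type*} [NormedField 𝕜] {q x : 𝕜}

noncomputable def qExp (q x : 𝕜) : 𝕜 := ∑' m : ℕ, x ^ m / qPochhammer q q m

/-- `x · d/dx` applied to `qExp q x`. -/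
noncomputable def thetaQExp (q x : 𝕜) : 𝕜 := ∑' m : ℕ, (m : 𝕜) * x ^ m / qPochhammer q q m

lemma norm_pow_mul_pow_div_qPochhammer_le {C r : ℝ} (hC : ∀ n, ‖(qPochhammer q q n)⁻¹‖ ≤ C)
    {y : 𝕜} (hy : ‖y‖ ≤ r) (k m : ℕ) :
    ‖(m : 𝕜) ^ k * y ^ m / qPochhammer q q m‖ ≤ C * ((m : ℝ) ^ k * r ^ m) := by
  rw [div_eq_mul_inv, norm_mul, norm_mul, norm_pow, norm_pow, mul_comm]
  have hm : ‖(m : 𝕜)‖ ≤ m := by simpa using Nat.norm_cast_le (α := 𝕜) m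
  gcongr
  · exact (norm_nonneg _).trans (hC 0)
  · exact hC m

lemma tsum_div_qPochhammer_qDifference (hq : ‖q‖ < 1) (c : ℕ → 𝕜)
    (hx : Summable fun m : ℕ ↦ c m * x ^ m / qPochhammer q q m)
    (hxq : Summable fun m : ℕ ↦ c m * (x * q) ^ m / qPochhammer q q m) :
    ∑' m : ℕ, c m * x ^ m / qPochhammer q q m - ∑' m : ℕ, c m * (x * q) ^ m / qPochhammer q q m =
      x * ∑' m : ℕ, c (m + 1) * x ^ m / qPochhammer q q m := by
  rw [← hx.tsum_sub hxq, (hx.sub hxq).tsum_eq_zero_add, ← tsum_mul_left]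
  have hP := qPochhammer_ne_zero hq hq.le
  have hfac := fun m ↦ one_sub_ne_zero_of_norm_lt_one (norm_mul_pow_lt_one hq hq.le m)
  simp only [pow_zero, mul_one, sub_self, zero_add, qPochhammer_succ]
  refine tsum_congr fun m ↦ ?_
  field_simp [hP m, hfac m]
  ring

variable [CompleteSpace 𝕜]

lemma summable_pow_mul_pow_div_qPochhammer (hq : ‖q‖ < 1) (hx : ‖x‖ < 1) (k : ℕ) :
    Summable fun m : ℕ ↦ (m : 𝕜) ^ k * x ^ m / qPochhammer q q m := by
  obtain ⟨C, hC⟩ := exists_norm_inv_qPochhammer_le hq hq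
  refine .of_norm_bounded ((summable_pow_mul_geometric_of_norm_lt_one k ?_).mul_left C)
    (norm_pow_mul_pow_div_qPochhammer_le hC le_rfl k)
  simpa using hx

lemma tendsto_tsum_pow_mul_mul_pow_div_qPochhammer (hq : ‖q‖ < 1) (hx : ‖x‖ < 1) (k : ℕ) :
    Tendsto (fun n : ℕ ↦ ∑' m : ℕ, (m : 𝕜) ^ k * (x * q ^ n) ^ m / qPochhammer q q m) atTop
      (𝓝 ((0 : 𝕜) ^ k)) := by
  obtain ⟨C, hC⟩ := exists_norm_inv_qPochhammer_le hq hq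
  have hlim : ∑' m : ℕ, (m : 𝕜) ^ k * 0 ^ m / qPochhammer q q m = 0 ^ k := by
    rw [tsum_eq_single 0 fun m hm ↦ by simp [zero_pow hm]]
    simp
  rw [← hlim]
  refine tendsto_tsum_of_dominated_convergence
    ((summable_pow_mul_geometric_of_norm_lt_one k (r := ‖x‖) (by simpa using hx)).mul_left C)
    (fun m ↦ ?_) (.of_forall fun n m ↦ norm_pow_mul_pow_div_qPochhammer_le hC ?_ k m)
  · have h0 : Tendsto (fun n : ℕ ↦ x * q ^ n) atTop (𝓝 0) := by
      simpa using (tendsto_pow_atTop_nhds_zero_of_norm_lt_one hq).const_mul x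
    exact (((h0.pow m).const_mul _).div_const _)
  · rw [norm_mul, norm_pow]
    exact mul_le_of_le_one_right (norm_nonneg x) (pow_le_one₀ (norm_nonneg q) hq.le)

lemma summable_div_qPochhammer (hq : ‖q‖ < 1) (hx : ‖x‖ < 1) :
    Summable fun m : ℕ ↦ x ^ m / qPochhammer q q m := by
  simpa using summable_pow_mul_pow_div_qPochhammer hq hx 0

lemma summable_natCast_mul_div_qPochhammer (hq : ‖q‖ < 1) (hx : ‖x‖ < 1) :
    Summable fun m : ℕ ↦ (m : 𝕜) * x ^ m / qPochhammer q q m := by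
  simpa using summable_pow_mul_pow_div_qPochhammer hq hx 1

lemma qExp_mul_q (hq : ‖q‖ < 1) (hx : ‖x‖ < 1) : qExp q (x * q) = (1 - x) * qExp q x := by
  have h := tsum_div_qPochhammer_qDifference hq (fun _ ↦ 1)
    (by simpa using summable_div_qPochhammer hq hx)
    (by simpa using summable_div_qPochhammer hq (norm_mul_lt_one hx hq.le))
  simp only [one_mul] at h
  rw [← qExp, ← qExp] at h
  linear_combination -h

lemma thetaQExp_mul_q (hq : ‖q‖ < 1) (hx : ‖x‖ < 1) :
    thetaQExp q (x * q) = (1 - x) * thetaQExp q x - x * qExp q x := by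
  have h := tsum_div_qPochhammer_qDifference hq (fun m ↦ (m : 𝕜))
    (summable_natCast_mul_div_qPochhammer hq hx)
    (summable_natCast_mul_div_qPochhammer hq (norm_mul_lt_one hx hq.le))
  have hsplit : ∑' m : ℕ, ((m + 1 : ℕ) : 𝕜) * x ^ m / qPochhammer q q m =
      thetaQExp q x + qExp q x := by
    rw [thetaQExp, qExp, ← (summable_natCast_mul_div_qPochhammer hq hx).tsum_add
      (summable_div_qPochhammer hq hx)]
    exact tsum_congr fun m ↦ by push_cast; ring
  rw [hsplit, ← thetaQExp, ← thetaQExp] at h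
  linear_combination -h

lemma tendsto_qExp_mul_pow (hq : ‖q‖ < 1) (hx : ‖x‖ < 1) :
    Tendsto (fun n : ℕ ↦ qExp q (x * q ^ n)) atTop (𝓝 1) := by
  simpa [qExp] using tendsto_tsum_pow_mul_mul_pow_div_qPochhammer hq hx 0

lemma tendsto_thetaQExp_mul_pow (hq : ‖q‖ < 1) (hx : ‖x‖ < 1) :
    Tendsto (fun n : ℕ ↦ thetaQExp q (x * q ^ n)) atTop (𝓝 0) := by
  simpa [thetaQExp] using tendsto_tsum_pow_mul_mul_pow_div_qPochhammer hq hx 1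

lemma qExp_mul_pow (hq : ‖q‖ < 1) (hx : ‖x‖ < 1) (n : ℕ) :
    qExp q (x * q ^ n) = qPochhammer x q n * qExp q x := by
  induction n with
  | zero => simp
  | succ n ih =>
    rw [pow_succ, ← mul_assoc, qExp_mul_q hq (norm_mul_pow_lt_one hx hq.le n), ih,
      qPochhammer_succ]
    ring

theorem tprod_one_sub_mul_pow_mul_qExp (hq : ‖q‖ < 1) (hx : ‖x‖ < 1) :
    (∏' i : ℕ, (1 - x * q ^ i)) * qExp q x = 1 := by
  refine tendsto_nhds_unique ((tendsto_qPochhammer x hq).mul_const _) ?_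
  simpa only [qExp_mul_pow hq hx] using tendsto_qExp_mul_pow hq hx

lemma summable_mul_pow_div_one_sub_mul_pow (hq : ‖q‖ < 1) (hx : ‖x‖ < 1) :
    Summable fun k : ℕ ↦ x * q ^ k / (1 - x * q ^ k) := by
  refine .of_norm_bounded ((summable_norm_mul_pow x hq).div_const (1 - ‖x‖)) fun k ↦ ?_
  have hxk : ‖x * q ^ k‖ ≤ ‖x‖ := by
    rw [norm_mul, norm_pow]
    exact mul_le_of_le_one_right (norm_nonneg x) (pow_le_one₀ (norm_nonneg q) hq.le)
  rw [norm_div]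
  gcongr
  linarith [norm_sub_norm_le (1 : 𝕜) (x * q ^ k), norm_one (α := 𝕜)]

lemma qExp_mul_thetaQExp_mul_pow (hq : ‖q‖ < 1) (hx : ‖x‖ < 1) (n : ℕ) :
    qExp q x * thetaQExp q (x * q ^ n) = qExp q (x * q ^ n) *
      (thetaQExp q x - qExp q x * ∑ k ∈ range n, x * q ^ k / (1 - x * q ^ k)) := by
  induction n with
  | zero => simp
  | succ n ih =>
    have hy := norm_mul_pow_lt_one hx hq.le n
    rw [pow_succ, ← mul_assoc, qExp_mul_q hq hy, thetaQExp_mul_q hq hy, sum_range_succ]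
    have h1 := one_sub_ne_zero_of_norm_lt_one hy
    field_simp
    linear_combination (1 - x * q ^ n) * ih

theorem thetaQExp_eq_qExp_mul_tsum (hq : ‖q‖ < 1) (hx : ‖x‖ < 1) :
    thetaQExp q x = qExp q x * ∑' k : ℕ, x * q ^ k / (1 - x * q ^ k) := by
  have hlhs := (tendsto_thetaQExp_mul_pow hq hx).const_mul (qExp q x)
  have hrhs := (tendsto_qExp_mul_pow hq hx).mul <| (tendsto_const_nhds (x := thetaQExp q x)).sub <|
    (summable_mul_pow_div_one_sub_mul_pow hq hx).hasSum.tendsto_sum_nat.const_mul (qExp q x)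
  simp only [qExp_mul_thetaQExp_mul_pow hq hx] at hlhs
  have h := tendsto_nhds_unique hlhs hrhs
  linear_combination -h

end qExp

/-- `(q;q)_∞ · ∑_{m≥1} m qᵐ/(q;q)_m = ∑_{m≥1} qᵐ/(1−qᵐ)` for `|q| < 1`. -/
theorem etaProd_mul_weighted_sum (q : ℂ) (hq : ‖q‖ < 1) :
    (∏' k : ℕ, (1 - q ^ (k + 1))) *
        ∑' m : ℕ, ((m : ℂ) + 1) * q ^ (m + 1) / ∏ i ∈ range (m + 1), (1 - q ^ (i + 1)) =
      ∑' m : ℕ, q ^ (m + 1) / (1 - q ^ (m + 1)) := by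
  have htheta : ∑' m : ℕ, ((m : ℂ) + 1) * q ^ (m + 1) / ∏ i ∈ range (m + 1), (1 - q ^ (i + 1)) =
      thetaQExp q q := by
    rw [thetaQExp, (summable_natCast_mul_div_qPochhammer hq hq).tsum_eq_zero_add]
    simp [qPochhammer, pow_succ']
  have hEuler := tprod_one_sub_mul_pow_mul_qExp hq hq
  simp only [← pow_succ'] at hEuler
  rw [htheta, thetaQExp_eq_qExp_mul_tsum hq hq, ← mul_assoc, hEuler, one_mul]
  simp only [← pow_succ']
end

section
/- For |q| < 1 (or as formal power series in q), the generating function for b(n) satisfies ∑_{n≥1} b(n) q^n = ∑_{m≥1} (q^m/(1−q^m)) · (−q;q)_{m−1}. -/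
open Finset

/-- `b n` is the sum of the smallest parts over all partitions of `n` into distinct
parts having an odd number of parts. -/
noncomputable def b (n : ℕ) : ℕ :=
  letI := Classical.decPred fun π : n.Partition => Odd (Multiset.card π.parts)
  ∑ π ∈ (Nat.Partition.distincts n).filter fun π => Odd (Multiset.card π.parts),
    π.minPart

/-!
Since `min π = #{i | i < min π}`, `b N` counts the pairs `(S, i)` where `S` is a set of an odd
number of distinct positive integers with sum `N` and `i < min S`, while the coefficient of `q^N`
on the right counts the triples `(M, j, T)` with `j, M ≥ 1`, `T ⊆ [1, M)` and `j M + ∑ T = N`.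
For `M = max S - i` the elements of `S` lie in a window of length `M`, hence have distinct residues
modulo `M`, and `(S, i) ↦ (M, ∑_{p ∈ S} ⌊p / M⌋, residues \ {0})` is a bijection: the residue `0`
is recovered from the parity of `#S`, and the position of the window from `∑ ⌊p / M⌋`, which grows
by one each time the window slides past a residue class. The analytic side is absolute convergence
of the triple series, regrouped once by `M` and once by weight.
-/

lemma Finset.eq_of_erase_eq_of_odd_card {α : Type*} [DecidableEq α] {s t : Finset α} {a : α}
    (h : s.erase a = t.erase a) (hs : Odd #s) (ht : Odd #t) : s = t := by
  obtain ⟨k, hk⟩ := hs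
  obtain ⟨l, hl⟩ := ht
  by_cases has : a ∈ s <;> by_cases hat : a ∈ t
  · rw [← insert_erase has, ← insert_erase hat, h]
  · have := congrArg card h
    rw [card_erase_of_mem has, erase_eq_of_notMem hat] at this
    omega
  · have := congrArg card h
    rw [card_erase_of_mem hat, erase_eq_of_notMem has] at this
    omega
  · rwa [erase_eq_of_notMem has, erase_eq_of_notMem hat] at h

lemma Finset.exists_odd_card_erase_eq {α : Type*} [DecidableEq α] {t : Finset α} {a : α}
    (ha : a ∉ t) : ∃ s : Finset α, s.erase a = t ∧ Odd #s ∧ s ⊆ insert a t := by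
  by_cases ht : Odd #t
  · exact ⟨t, erase_eq_of_notMem ha, ht, subset_insert a t⟩
  · refine ⟨insert a t, erase_insert ha, ?_, subset_refl _⟩
    rw [card_insert_of_notMem ha]
    exact (Nat.not_odd_iff_even.1 ht).add_one

lemma Nat.Partition.lt_minPart_iff {n i : ℕ} {π : n.Partition} (h : π.parts ≠ 0) :
    i < π.minPart ↔ ∀ p ∈ π.parts, i < p := by
  obtain ⟨p₀, hp₀⟩ := Multiset.exists_mem_of_ne_zero h
  exact ⟨fun hi p hp => hi.trans_le (Nat.sInf_le hp),
    fun hi => hi _ (Nat.sInf_mem (s := {i | i ∈ π.parts}) ⟨p₀, hp₀⟩)⟩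

namespace SmallestParts

/-- For `ρ ≤ L`, the largest number `≤ L` that is congruent to `ρ` modulo `M`. -/
def liftResidue (M L ρ : ℕ) : ℕ := ρ + M * ((L - ρ) / M)

section liftResidue

variable {M L ρ p : ℕ}

lemma liftResidue_mod (hρ : ρ < M) : liftResidue M L ρ % M = ρ := by
  rw [liftResidue, Nat.add_mul_mod_self_left, Nat.mod_eq_of_lt hρ]

lemma liftResidue_div (hρ : ρ < M) : liftResidue M L ρ / M = (L - ρ) / M := by
  rw [liftResidue, Nat.add_mul_div_left _ _ (by omega), Nat.div_eq_of_lt hρ, zero_add]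

lemma liftResidue_le (hρ : ρ ≤ L) : liftResidue M L ρ ≤ L := by
  have := Nat.mod_add_div (L - ρ) M
  rw [liftResidue]
  omega

lemma lt_liftResidue_add (hM : 0 < M) : L < liftResidue M L ρ + M := by
  have := Nat.mod_add_div (L - ρ) M
  have := Nat.mod_lt (L - ρ) hM
  rw [liftResidue]
  omega

lemma liftResidue_mod_self (hp : p ≤ L) (hLp : L < p + M) : liftResidue M L (p % M) = p := by
  have hdiv := Nat.mod_add_div p M
  have hsplit : L - p % M = L - p + M * (p / M) := by omega
  rw [liftResidue, hsplit, Nat.add_mul_div_left _ _ (by omega), Nat.div_eq_of_lt (by omega),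
    zero_add, hdiv]

end liftResidue

/-- As `L` grows this increases by one exactly when `L` passes a number with residue in `V`
(`floorSum_succ`), so together with `V` its value pins down `L`. -/
def floorSum (M : ℕ) (V : Finset ℕ) (L : ℕ) : ℕ := ∑ ρ ∈ V, (L - ρ) / M

section floorSum

variable {M L L' j : ℕ} {V : Finset ℕ}

lemma floorSum_succ (hVM : ∀ ρ ∈ V, ρ < M) (hVL : ∀ ρ ∈ V, ρ ≤ L) :
    floorSum M V (L + 1) = floorSum M V L + if (L + 1) % M ∈ V then 1 else 0 := by
  have hterm : ∀ ρ ∈ V, (L + 1 - ρ) / M = (L - ρ) / M + if (L + 1) % M = ρ then 1 else 0 := by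
    intro ρ hρ
    have hdvd : M ∣ L - ρ + 1 ↔ (L + 1) % M = ρ := by
      rw [show L - ρ + 1 = L + 1 - ρ by have := hVL ρ hρ; omega,
        ← Nat.modEq_iff_dvd' (by have := hVL ρ hρ; omega), Nat.ModEq,
        Nat.mod_eq_of_lt (hVM ρ hρ), eq_comm]
    rw [show L + 1 - ρ = L - ρ + 1 by have := hVL ρ hρ; omega, Nat.succ_div]
    simp only [hdvd]
  rw [floorSum, sum_congr rfl hterm, sum_add_distrib, sum_ite_eq]
  rfl

lemma floorSum_lt_floorSum (hLL' : L < L') (hL' : L' % M ∈ V) (hL : L' % M ≤ L) :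
    floorSum M V L < floorSum M V L' := by
  have hM : 0 < M := Nat.pos_of_ne_zero fun h => by
    subst h; rw [Nat.mod_zero] at hL; omega
  refine sum_lt_sum (fun ρ _ => Nat.div_le_div_right (by omega)) ⟨L' % M, hL', ?_⟩
  have := Nat.mod_add_div L' M
  rw [show L' - L' % M = M * (L' / M) by omega, Nat.mul_div_cancel_left _ hM,
    Nat.div_lt_iff_lt_mul hM, mul_comm]
  omega

lemma floorSum_pos (hM : 0 < M) (hML : M ≤ L) (hL : L % M ∈ V) : 0 < floorSum M V L := by
  refine lt_of_lt_of_le ?_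
    (single_le_sum (f := fun ρ => (L - ρ) / M) (fun _ _ => Nat.zero_le _) hL)
  have := Nat.mod_add_div L M
  rw [show L - L % M = M * (L / M) by omega, Nat.mul_div_cancel_left _ hM]
  exact Nat.div_pos hML hM

lemma exists_floorSum_eq (hVM : ∀ ρ ∈ V, ρ < M) (hV : V.Nonempty) (hj : 0 < j) :
    ∃ L, M ≤ L ∧ L % M ∈ V ∧ floorSum M V L = j := by
  obtain ⟨ρ₀, hρ₀⟩ := hV
  have hM : 0 < M := by have := hVM ρ₀ hρ₀; omega
  have hex : ∃ l, j ≤ floorSum M V (M - 1 + l) := by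
    refine ⟨j * M, le_trans ?_ (single_le_sum (f := fun ρ => (M - 1 + j * M - ρ) / M)
      (fun _ _ => Nat.zero_le _) hρ₀)⟩
    rw [Nat.le_div_iff_mul_le hM]
    have := hVM ρ₀ hρ₀
    omega
  obtain ⟨l₀, hl₀, hmin⟩ : ∃ l₀, j ≤ floorSum M V (M - 1 + l₀) ∧
      ∀ l < l₀, ¬ j ≤ floorSum M V (M - 1 + l) :=
    ⟨Nat.find hex, Nat.find_spec hex, fun l hl => Nat.find_min hex hl⟩
  cases l₀ with
  | zero =>
    have hzero : floorSum M V (M - 1) = 0 :=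
      sum_eq_zero fun ρ _ => Nat.div_eq_of_lt (by omega)
    rw [add_zero, hzero] at hl₀
    omega
  | succ l =>
    have hprev := hmin l (Nat.lt_succ_self l)
    rw [← add_assoc, floorSum_succ hVM fun ρ hρ => by have := hVM ρ hρ; omega] at hl₀
    split_ifs at hl₀ with hmem
    · refine ⟨M - 1 + l + 1, by omega, hmem, ?_⟩
      rw [floorSum_succ hVM fun ρ hρ => by have := hVM ρ hρ; omega, if_pos hmem]
      omega
    · omega

lemma eq_of_floorSum_eq (hVM : ∀ ρ ∈ V, ρ < M) (hML : M ≤ L) (hML' : M ≤ L') (hL : L % M ∈ V)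
    (hL' : L' % M ∈ V) (h : floorSum M V L = floorSum M V L') : L = L' := by
  rcases lt_trichotomy L L' with hlt | heq | hgt
  · exact absurd h (floorSum_lt_floorSum hlt hL' (by have := hVM _ hL'; omega)).ne
  · exact heq
  · exact absurd h (floorSum_lt_floorSum hgt hL (by have := hVM _ hL; omega)).ne'

end floorSum

section window

variable {M L : ℕ} {S V : Finset ℕ}

lemma injOn_mod_of_window (hS : ∀ p ∈ S, p ≤ L ∧ L < p + M) : Set.InjOn (· % M) S := by
  intro p hp p' hp' h
  rw [← liftResidue_mod_self (hS p hp).1 (hS p hp).2,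
    ← liftResidue_mod_self (hS p' hp').1 (hS p' hp').2]
  exact congrArg (liftResidue M L) h

lemma image_liftResidue_image_mod (hS : ∀ p ∈ S, p ≤ L ∧ L < p + M) :
    (S.image (· % M)).image (liftResidue M L) = S := by
  rw [image_image]
  exact (image_congr fun p hp => liftResidue_mod_self (hS p hp).1 (hS p hp).2).trans image_id

lemma sum_div_eq_floorSum (hS : ∀ p ∈ S, p ≤ L ∧ L < p + M) :
    ∑ p ∈ S, p / M = floorSum M (S.image (· % M)) L := by
  rw [floorSum, sum_image (injOn_mod_of_window hS)]
  refine sum_congr rfl fun p hp => ?_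
  have hM : 0 < M := by have := hS p hp; omega
  rw [← liftResidue_div (Nat.mod_lt p hM), liftResidue_mod_self (hS p hp).1 (hS p hp).2]

lemma injOn_liftResidue (hVM : ∀ ρ ∈ V, ρ < M) : Set.InjOn (liftResidue M L) V :=
  fun ρ hρ ρ' hρ' h => by
    rw [← liftResidue_mod (L := L) (hVM ρ hρ), ← liftResidue_mod (L := L) (hVM ρ' hρ'), h]

lemma image_mod_image_liftResidue (hVM : ∀ ρ ∈ V, ρ < M) :
    (V.image (liftResidue M L)).image (· % M) = V := by
  rw [image_image]
  exact (image_congr fun ρ hρ => liftResidue_mod (hVM ρ hρ)).trans image_id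

lemma sum_image_liftResidue (hVM : ∀ ρ ∈ V, ρ < M) :
    ∑ p ∈ V.image (liftResidue M L), p = ∑ ρ ∈ V, ρ + M * floorSum M V L := by
  rw [sum_image (injOn_liftResidue hVM), floorSum, mul_sum, ← sum_add_distrib]
  rfl

end window

/-- When `i < min S`, the parts of `S` lie in the window `(i, max S]` of length `M = max S - i`, so
they have distinct residues modulo `M`; the residue `0` is dropped, to be recovered from the parity
of `#S`. -/
def residueTriple (S : Finset ℕ) (i : ℕ) : ℕ × ℕ × Finset ℕ :=
  (S.sup id - i - 1, ∑ p ∈ S, p / (S.sup id - i) - 1, (S.image (· % (S.sup id - i))).erase 0)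

lemma residueTriple_eq {S : Finset ℕ} {i L : ℕ} (hS : ∀ p ∈ S, i < p ∧ p ≤ L) (hL : L ∈ S) :
    residueTriple S i = (L - i - 1, floorSum (L - i) (S.image (· % (L - i))) L - 1,
      (S.image (· % (L - i))).erase 0) := by
  have hsup : S.sup id = L :=
    le_antisymm (Finset.sup_le fun p hp => (hS p hp).2) (le_sup (f := id) hL)
  have hiL := (hS L hL).1
  rw [residueTriple, hsup,
    sum_div_eq_floorSum fun p hp => ⟨(hS p hp).2, by have := hS p hp; omega⟩]

/-- `(m, j, T)` stands for the partition of `(m + 1) * (j + 1) + ∑ T` into `j + 1` copies of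
`m + 1` and the distinct parts `T ⊆ [1, m]`, i.e. a term of `q^{m+1}/(1 - q^{m+1}) · (-q; q)_m`. -/
def tripleWeight (y : ℕ × ℕ × Finset ℕ) : ℕ := (y.1 + 1) * (y.2.1 + 1) + ∑ t ∈ y.2.2, t

def triples (N : ℕ) : Finset (ℕ × ℕ × Finset ℕ) :=
  (range N ×ˢ range N ×ˢ (range N).powerset).filter
    fun y => y.2.2 ⊆ Ico 1 (y.1 + 1) ∧ tripleWeight y = N

lemma mem_triples {N : ℕ} {y : ℕ × ℕ × Finset ℕ} :
    y ∈ triples N ↔ y.2.2 ⊆ Ico 1 (y.1 + 1) ∧ tripleWeight y = N := by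
  refine mem_filter.trans (and_iff_right_of_imp ?_)
  rintro ⟨hT, rfl⟩
  obtain ⟨m, j, T⟩ := y
  simp only [tripleWeight, mem_product, mem_range, mem_powerset] at hT ⊢
  have hm : m + 1 ≤ (m + 1) * (j + 1) := Nat.le_mul_of_pos_right _ (by omega)
  have hj : j + 1 ≤ (m + 1) * (j + 1) := Nat.le_mul_of_pos_left _ (by omega)
  refine ⟨by omega, by omega, fun t ht => ?_⟩
  have := mem_Ico.1 (hT ht)
  rw [mem_range]
  omega

section residueTriple

variable {S S' : Finset ℕ} {i i' N : ℕ}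

lemma residueTriple_mem_triples (hS : ∀ p ∈ S, i < p) (hne : S.Nonempty)
    (hsum : ∑ p ∈ S, p = N) : residueTriple S i ∈ triples N := by
  obtain ⟨L, hL, hmax⟩ : ∃ L ∈ S, ∀ p ∈ S, p ≤ L := ⟨S.max' hne, S.max'_mem hne, S.le_max'⟩
  have hiL := hS L hL
  have hwin : ∀ p ∈ S, p ≤ L ∧ L < p + (L - i) :=
    fun p hp => ⟨hmax p hp, by have := hS p hp; omega⟩
  have hpos := floorSum_pos (V := S.image (· % (L - i))) (by omega) (by omega)
    (mem_image_of_mem _ hL)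
  rw [← sum_div_eq_floorSum hwin] at hpos
  rw [residueTriple_eq (fun p hp => ⟨hS p hp, hmax p hp⟩) hL, mem_triples, tripleWeight,
    ← sum_div_eq_floorSum hwin]
  refine ⟨fun t ht => ?_, ?_⟩
  · obtain ⟨ht0, ht⟩ := mem_erase.1 ht
    obtain ⟨p, -, rfl⟩ := mem_image.1 ht
    have := Nat.mod_lt p (show 0 < L - i by omega)
    rw [mem_Ico]
    omega
  · dsimp only
    rw [Nat.sub_add_cancel (by omega), Nat.sub_add_cancel hpos,
      sum_erase (f := fun t : ℕ => t) _ rfl, sum_image (injOn_mod_of_window hwin), mul_sum,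
      ← sum_add_distrib, ← hsum]
    exact sum_congr rfl fun p _ => Nat.div_add_mod p (L - i)

lemma eq_of_residueTriple_eq (hS : ∀ p ∈ S, i < p) (hodd : Odd #S) (hS' : ∀ p ∈ S', i' < p)
    (hodd' : Odd #S') (h : residueTriple S i = residueTriple S' i') : S = S' ∧ i = i' := by
  obtain ⟨L, hL, hmax⟩ : ∃ L ∈ S, ∀ p ∈ S, p ≤ L :=
    ⟨S.max' _, S.max'_mem (card_pos.1 hodd.pos), S.le_max'⟩
  obtain ⟨L', hL', hmax'⟩ : ∃ L' ∈ S', ∀ p ∈ S', p ≤ L' :=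
    ⟨S'.max' _, S'.max'_mem (card_pos.1 hodd'.pos), S'.le_max'⟩
  have hiL := hS L hL
  have hiL' := hS' L' hL'
  rw [residueTriple_eq (fun p hp => ⟨hS p hp, hmax p hp⟩) hL,
    residueTriple_eq (fun p hp => ⟨hS' p hp, hmax' p hp⟩) hL', Prod.mk.injEq, Prod.mk.injEq] at h
  obtain ⟨hM, hj, hT⟩ := h
  set M := L - i
  have hMM : L' - i' = M := by omega
  rw [hMM] at hj hT
  have hwin : ∀ p ∈ S, p ≤ L ∧ L < p + M :=
    fun p hp => ⟨hmax p hp, by have := hS p hp; omega⟩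
  have hwin' : ∀ p ∈ S', p ≤ L' ∧ L' < p + M :=
    fun p hp => ⟨hmax' p hp, by have := hS' p hp; omega⟩
  have hV : S.image (· % M) = S'.image (· % M) := by
    refine eq_of_erase_eq_of_odd_card hT ?_ ?_
    · rwa [card_image_of_injOn (injOn_mod_of_window hwin)]
    · rwa [card_image_of_injOn (injOn_mod_of_window hwin')]
  set V := S'.image (· % M)
  rw [hV] at hj
  have hLV : L % M ∈ V := hV ▸ mem_image_of_mem _ hL
  have hL'V : L' % M ∈ V := mem_image_of_mem _ hL'
  have hfl : floorSum M V L = floorSum M V L' := by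
    have := floorSum_pos (by omega) (by omega) hLV
    have := floorSum_pos (by omega) (by omega) hL'V
    omega
  have hVM : ∀ ρ ∈ V, ρ < M := fun ρ hρ => by
    obtain ⟨p, -, rfl⟩ := mem_image.1 hρ
    exact Nat.mod_lt p (by omega)
  obtain rfl : L = L' := eq_of_floorSum_eq hVM (by omega) (by omega) hLV hL'V hfl
  refine ⟨?_, by omega⟩
  calc S = (S.image (· % M)).image (liftResidue M L) := (image_liftResidue_image_mod hwin).symm
    _ = S' := by rw [hV, image_liftResidue_image_mod hwin']

lemma exists_residueTriple_eq {y : ℕ × ℕ × Finset ℕ} (hy : y ∈ triples N) :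
    ∃ S i, (∀ p ∈ S, i < p) ∧ Odd #S ∧ ∑ p ∈ S, p = N ∧ residueTriple S i = y := by
  obtain ⟨m, j, T⟩ := y
  obtain ⟨hT, hw⟩ := mem_triples.1 hy
  dsimp only [tripleWeight] at hT hw
  obtain ⟨V, hVT, hodd, hVsub⟩ := exists_odd_card_erase_eq (a := (0 : ℕ)) (t := T) fun h0 => by
    simpa using hT h0
  have hVM : ∀ ρ ∈ V, ρ < m + 1 := fun ρ hρ => by
    rcases mem_insert.1 (hVsub hρ) with rfl | hρT
    · omega
    · exact (mem_Ico.1 (hT hρT)).2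
  obtain ⟨L, hML, hLV, hfl⟩ :=
    exists_floorSum_eq hVM (card_pos.1 hodd.pos) (by omega : 0 < j + 1)
  have hwin : ∀ p ∈ V.image (liftResidue (m + 1) L), L - (m + 1) < p ∧ p ≤ L := by
    intro p hp
    obtain ⟨ρ, hρ, rfl⟩ := mem_image.1 hp
    have := hVM ρ hρ
    have := lt_liftResidue_add (M := m + 1) (L := L) (ρ := ρ) (Nat.succ_pos m)
    exact ⟨by omega, liftResidue_le (by omega)⟩
  have hLS : L ∈ V.image (liftResidue (m + 1) L) :=
    mem_image.2 ⟨L % (m + 1), hLV, liftResidue_mod_self le_rfl (by omega)⟩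
  refine ⟨V.image (liftResidue (m + 1) L), L - (m + 1), fun p hp => (hwin p hp).1, ?_, ?_, ?_⟩
  · rwa [card_image_of_injOn (injOn_liftResidue hVM)]
  · have hVT' : ∑ ρ ∈ V, ρ = ∑ t ∈ T, t := by
      rw [← hVT, sum_erase (f := fun t : ℕ => t) _ rfl]
    rw [sum_image_liftResidue hVM, hfl, hVT', ← hw]
    ring
  · rw [residueTriple_eq hwin hLS, show L - (L - (m + 1)) = m + 1 by omega,
      image_mod_image_liftResidue hVM, hfl, hVT]
    rfl

end residueTriple

noncomputable def smallestPartPairs (N : ℕ) : Finset (Σ _ : N.Partition, ℕ) :=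
  ((Nat.Partition.distincts N).filter fun π => Odd (Multiset.card π.parts)).sigma
    fun π => range π.minPart

lemma mem_smallestPartPairs {N : ℕ} {x : Σ _ : N.Partition, ℕ} :
    x ∈ smallestPartPairs N ↔
      x.1.parts.Nodup ∧ Odd (Multiset.card x.1.parts) ∧ x.2 < x.1.minPart := by
  simp [smallestPartPairs, Nat.Partition.distincts, and_assoc]

lemma b_eq_card_smallestPartPairs (N : ℕ) : b N = #(smallestPartPairs N) := by
  rw [smallestPartPairs, card_sigma, b]
  simp only [card_range]
  congr

lemma card_smallestPartPairs (N : ℕ) : #(smallestPartPairs N) = #(triples N) := by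
  have hval : ∀ π : N.Partition, π.parts.Nodup → π.parts.toFinset.val = π.parts :=
    fun π h => by rw [Multiset.toFinset_val, Multiset.dedup_eq_self.2 h]
  have hpair : ∀ x ∈ smallestPartPairs N, (∀ p ∈ x.1.parts.toFinset, x.2 < p) ∧
      Odd #x.1.parts.toFinset ∧ ∑ p ∈ x.1.parts.toFinset, p = N := by
    intro x hx
    obtain ⟨hnd, hodd, hi⟩ := mem_smallestPartPairs.1 hx
    have hne : x.1.parts ≠ 0 := fun h => by simp [h] at hodd
    refine ⟨fun p hp => (Nat.Partition.lt_minPart_iff hne).1 hi p (Multiset.mem_toFinset.1 hp),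
      by rwa [card, hval _ hnd], ?_⟩
    exact (sum_val _).symm.trans ((congrArg Multiset.sum (hval _ hnd)).trans x.1.parts_sum)
  refine card_bij (fun x _ => residueTriple x.1.parts.toFinset x.2) (fun x hx => ?_)
    (fun x hx x' hx' h => ?_) (fun y hy => ?_)
  · obtain ⟨hS, hodd, hsum⟩ := hpair x hx
    exact residueTriple_mem_triples hS (card_pos.1 hodd.pos) hsum
  · obtain ⟨hS, hodd, -⟩ := hpair x hx
    obtain ⟨hS', hodd', -⟩ := hpair x' hx'
    obtain ⟨hSS, hii⟩ := eq_of_residueTriple_eq hS hodd hS' hodd' h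
    obtain ⟨π, i⟩ := x
    obtain ⟨π', i'⟩ := x'
    have hππ : π = π' := Nat.Partition.ext <| by
      rw [← hval π (mem_smallestPartPairs.1 hx).1, ← hval π' (mem_smallestPartPairs.1 hx').1, hSS]
    subst hππ hii
    rfl
  · obtain ⟨S, i, hS, hodd, hsum, rfl⟩ := exists_residueTriple_eq hy
    let π : N.Partition :=
      ⟨S.val, fun hp => (Nat.zero_le i).trans_lt (hS _ hp), (sum_val S).trans hsum⟩
    have hπ : π.parts ≠ 0 := fun h => (card_pos.1 hodd.pos).ne_empty (val_eq_zero.1 h)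
    refine ⟨⟨π, i⟩, mem_smallestPartPairs.2 ⟨S.nodup, hodd, ?_⟩, ?_⟩
    · exact (Nat.Partition.lt_minPart_iff hπ).2 hS
    · show residueTriple S.val.toFinset i = residueTriple S i
      rw [val_toFinset]

lemma b_eq_card_triples (N : ℕ) : b N = #(triples N) := by
  rw [b_eq_card_smallestPartPairs, card_smallestPartPairs]

lemma triples_zero : triples 0 = ∅ :=
  eq_empty_of_forall_notMem fun y hy => by
    have := (mem_triples.1 hy).2
    rw [tripleWeight] at this
    have : 0 < (y.1 + 1) * (y.2.1 + 1) := by positivity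
    omega

section analytic

variable {K : Type*} [NormedField K] {z : K}

def genFunTerm (z : K) (m : ℕ) : K :=
  z ^ (m + 1) / (1 - z ^ (m + 1)) * ∏ k ∈ range m, (1 + z ^ (k + 1))

def tripleTerm (z : K) (y : ℕ × ℕ × Finset ℕ) : K :=
  if y.2.2 ⊆ Ico 1 (y.1 + 1) then z ^ tripleWeight y else 0

lemma hasSum_pow_mul_succ (hz : ‖z‖ < 1) (m : ℕ) :
    HasSum (fun j : ℕ => z ^ ((m + 1) * (j + 1))) (z ^ (m + 1) / (1 - z ^ (m + 1))) := by
  have hw : ‖z ^ (m + 1)‖ < 1 := by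
    rw [norm_pow]
    exact pow_lt_one₀ (norm_nonneg z) hz (Nat.succ_ne_zero m)
  have hgeom : (fun j : ℕ => z ^ ((m + 1) * (j + 1))) =
      fun j => z ^ (m + 1) * (z ^ (m + 1)) ^ j := by
    ext j
    rw [← pow_succ', ← pow_mul]
  rw [hgeom, div_eq_mul_inv]
  exact (hasSum_geometric_of_norm_lt_one hw).mul_left _

lemma hasSum_pow_sum_of_subset_Ico {R : Type*} [CommSemiring R] [TopologicalSpace R] (z : R)
    (m : ℕ) :
    HasSum (fun T : Finset ℕ => if T ⊆ Ico 1 (m + 1) then z ^ ∑ t ∈ T, t else 0)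
      (∏ k ∈ range m, (1 + z ^ (k + 1))) := by
  have hprod : ∏ k ∈ range m, (1 + z ^ (k + 1)) =
      ∑ T ∈ (Ico 1 (m + 1)).powerset, if T ⊆ Ico 1 (m + 1) then z ^ ∑ t ∈ T, t else 0 := by
    rw [show ∏ k ∈ range m, (1 + z ^ (k + 1)) = ∏ k ∈ Ico 1 (m + 1), (1 + z ^ k) by
      rw [prod_Ico_eq_prod_range, Nat.add_sub_cancel]
      simp only [add_comm 1], prod_one_add]
    exact sum_congr rfl fun T hT => by rw [if_pos (mem_powerset.1 hT), prod_pow_eq_pow_sum]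
  rw [hprod]
  exact hasSum_sum_of_ne_finset_zero fun T hT => if_neg (mt mem_powerset.2 hT)

lemma hasSum_tripleTerm_slice [CompleteSpace K] (hz : ‖z‖ < 1) (m : ℕ) :
    HasSum (fun x : ℕ × Finset ℕ => tripleTerm z (m, x)) (genFunTerm z m) := by
  have hj := hasSum_pow_mul_succ hz m
  have hT := hasSum_pow_sum_of_subset_Ico z m
  have hsplit : (fun x : ℕ × Finset ℕ => tripleTerm z (m, x)) = fun x =>
      z ^ ((m + 1) * (x.1 + 1)) * if x.2 ⊆ Ico 1 (m + 1) then z ^ ∑ t ∈ x.2, t else 0 := by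
    ext ⟨j, T⟩
    simp only [tripleTerm, tripleWeight]
    split_ifs
    · rw [pow_add]
    · rw [mul_zero]
  have hT' : Summable fun T : Finset ℕ => ‖if T ⊆ Ico 1 (m + 1) then z ^ ∑ t ∈ T, t else 0‖ :=
    summable_of_ne_finset_zero (s := (Ico 1 (m + 1)).powerset) fun T hT => by
      rw [if_neg (mt mem_powerset.2 hT), norm_zero]
  have hj' : Summable fun j : ℕ => ‖z ^ ((m + 1) * (j + 1))‖ := by
    simpa only [norm_pow] using (hasSum_pow_mul_succ (z := ‖z‖) (by rwa [norm_norm]) m).summable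
  have hprod := summable_mul_of_summable_norm hj' hT'
  have hm := HasSum.mul hj hT hprod
  rw [hsplit]
  unfold genFunTerm
  exact hm

lemma summable_genFunTerm {r : ℝ} (hr0 : 0 ≤ r) (hr1 : r < 1) : Summable (genFunTerm r) := by
  have hprod : ∀ m, ∏ k ∈ range m, (1 + r ^ (k + 1)) ≤ Real.exp (1 - r)⁻¹ := fun m =>
    calc ∏ k ∈ range m, (1 + r ^ (k + 1)) ≤ Real.exp (∑ k ∈ range m, r ^ (k + 1)) :=
          Real.prod_one_add_le_exp_sum _ fun k => pow_nonneg hr0 _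
      _ ≤ Real.exp (1 - r)⁻¹ := by
          rw [Real.exp_le_exp]
          calc ∑ k ∈ range m, r ^ (k + 1) ≤ ∑ k ∈ range m, r ^ k :=
                sum_le_sum fun k _ => pow_le_pow_of_le_one hr0 hr1.le (Nat.le_succ k)
            _ ≤ r ^ 0 / (1 - r) := by rw [range_eq_Ico]; exact geom_sum_Ico_le_of_lt_one hr0 hr1
            _ = (1 - r)⁻¹ := by rw [pow_zero, one_div]
  refine Summable.of_nonneg_of_le (fun m => ?_) (fun m => ?_)
    ((summable_geometric_of_lt_one hr0 hr1).mul_left ((1 - r)⁻¹ * Real.exp (1 - r)⁻¹))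
  · have : r ^ (m + 1) < 1 := pow_lt_one₀ hr0 hr1 (Nat.succ_ne_zero m)
    exact mul_nonneg (div_nonneg (pow_nonneg hr0 _) (by linarith))
      (prod_nonneg fun k _ => by positivity)
  · have hfrac : r ^ (m + 1) / (1 - r ^ (m + 1)) ≤ r ^ m * (1 - r)⁻¹ := by
      have : r ^ (m + 1) ≤ r := pow_le_of_le_one hr0 hr1.le (Nat.succ_ne_zero m)
      rw [div_eq_mul_inv]
      exact mul_le_mul (pow_le_pow_of_le_one hr0 hr1.le (Nat.le_succ m))
        (inv_anti₀ (by linarith) (by linarith)) (inv_nonneg.2 (by linarith)) (pow_nonneg hr0 _)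
    calc genFunTerm r m ≤ r ^ m * (1 - r)⁻¹ * Real.exp (1 - r)⁻¹ :=
          mul_le_mul hfrac (hprod m) (prod_nonneg fun k _ => by positivity) (by positivity)
      _ = (1 - r)⁻¹ * Real.exp (1 - r)⁻¹ * r ^ m := by ring

lemma norm_tripleTerm (z : K) (y : ℕ × ℕ × Finset ℕ) : ‖tripleTerm z y‖ = tripleTerm ‖z‖ y := by
  unfold tripleTerm
  split_ifs <;> simp

lemma summable_tripleTerm [CompleteSpace K] (hz : ‖z‖ < 1) : Summable (tripleTerm z) := by
  have hz' : ‖‖z‖‖ < 1 := by rwa [norm_norm]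
  have hnonneg : 0 ≤ tripleTerm ‖z‖ := fun y => by
    unfold tripleTerm
    split_ifs <;> positivity
  have hreal : Summable (tripleTerm ‖z‖) :=
    (summable_prod_of_nonneg hnonneg).2 ⟨fun m => (hasSum_tripleTerm_slice hz' m).summable,
      (summable_genFunTerm (norm_nonneg z) hz).congr fun m =>
        (hasSum_tripleTerm_slice hz' m).tsum_eq.symm⟩
  exact Summable.of_norm (hreal.congr fun y => (norm_tripleTerm z y).symm)

lemma hasSum_tripleTerm [CompleteSpace K] (hz : ‖z‖ < 1) :
    HasSum (tripleTerm z) (∑' m, genFunTerm z m) := by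
  have h := (summable_tripleTerm hz).hasSum
  rwa [(h.prod_fiberwise (hasSum_tripleTerm_slice hz)).tsum_eq]

lemma tsum_tripleTerm_fiber (z : K) (n : ℕ) :
    ∑' y : tripleWeight ⁻¹' {n}, tripleTerm z y = #(triples n) * z ^ n := by
  rw [_root_.tsum_subtype, tsum_eq_sum (s := triples n), ← nsmul_eq_mul, ← sum_const]
  · refine sum_congr rfl fun y hy => ?_
    obtain ⟨hT, hw⟩ := mem_triples.1 hy
    rw [Set.indicator_of_mem (show y ∈ tripleWeight ⁻¹' {n} from hw), tripleTerm, if_pos hT, hw]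
  · intro y hy
    by_cases hw : tripleWeight y = n
    · rw [Set.indicator_of_mem (show y ∈ tripleWeight ⁻¹' {n} from hw), tripleTerm,
        if_neg fun hT => hy (mem_triples.2 ⟨hT, hw⟩)]
    · exact Set.indicator_of_notMem (show y ∉ tripleWeight ⁻¹' {n} from hw) _

lemma hasSum_card_triples [CompleteSpace K] (hz : ‖z‖ < 1) :
    HasSum (fun n => (#(triples n) : K) * z ^ n) (∑' m, genFunTerm z m) := by
  simpa only [tsum_tripleTerm_fiber] using (hasSum_tripleTerm hz).tsum_fiberwise tripleWeight

end analytic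

end SmallestParts

/-- `∑_{n≥1} b(n) qⁿ = ∑_{m≥1} (qᵐ/(1−qᵐ)) · (−q;q)_{m−1}` for `|q| < 1`. -/
theorem b_genFun (q : ℂ) (hq : ‖q‖ < 1) :
    ∑' n : ℕ, (b (n + 1) : ℂ) * q ^ (n + 1) =
      ∑' m : ℕ, q ^ (m + 1) / (1 - q ^ (m + 1)) *
        ∏ k ∈ range m, (1 + q ^ (k + 1)) := by
  have h : HasSum (fun n => (b n : ℂ) * q ^ n) (∑' m, SmallestParts.genFunTerm q m) := by
    simpa only [SmallestParts.b_eq_card_triples] using SmallestParts.hasSum_card_triples hq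
  have hb0 : b 0 = 0 := by
    rw [SmallestParts.b_eq_card_triples, SmallestParts.triples_zero, card_empty]
  have hshift := ((hasSum_nat_add_iff' 1).2 h).tsum_eq
  simp only [sum_range_one, hb0, Nat.cast_zero, zero_mul, sub_zero] at hshift
  exact hshift
end
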